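/- arXiv:math/0510051 — 9 statements merged into one kernel-verified Lean document; each statement's English description precedes it below -/
import Mathlib

section
/- Every track layout of the graph K_n' (the 1-subdivision of the complete graph K_n) uses at least (n/2)^{2/3} tracks. -/
/-- The 1-subdivision `K_n'` of the complete graph `K_n`: original vertices
`Fin n` together with one division vertex for each edge of `K_n`. -/
def KnSub (n : ℕ) : SimpleGraph (Fin n ⊕ {e : Sym2 (Fin n) // ¬ e.IsDiag}) where
  Adj a b :=
    (∃ i e, a = Sum.inl i ∧ b = Sum.inr e ∧ i ∈ e.1) ∨
    (∃ i e, b = Sum.inl i ∧ a = Sum.inr e ∧ i ∈ e.1)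
  symm := by
    constructor
    intro a b h
    rcases h with h | h
    · exact Or.inr h
    · exact Or.inl h
  loopless := by
    constructor
    rintro a (⟨i, e, h1, h2, _⟩ | ⟨i, e, h1, h2, _⟩) <;> simp_all

/-!
Some track holds `m ≥ n / t` original vertices; split them by position into a lower half `A` and
an upper half `B`. For `a ∈ A`, `b ∈ B` the division vertex of `ab` is adjacent to `a`, so it
lies on another track, and two such division vertices on one track would give an
X-crossing. Hence `⌊m/2⌋ ⌈m/2⌉ < t`, so `m² < 4t` and `n² ≤ t² m² ≤ 4t³`.
-/

open Finset

structure SimpleGraph.IsTrackLayout {V : Type*} (G : SimpleGraph V) {t : ℕ} (track : V → Fin t)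
    (pos : V → ℕ) : Prop where
  track_ne : ∀ v w, G.Adj v w → track v ≠ track w
  pos_ne : ∀ v w, v ≠ w → track v = track w → pos v ≠ pos w
  not_crossing : ∀ v w x y, G.Adj v w → G.Adj x y → track v = track x → track w = track y →
    ¬ (pos v < pos x ∧ pos y < pos w)

/-- Whichever of `d`, `d'` comes first on their common track, either `db` and `d'a'` or `d'b'`
and `da` form an X-crossing. -/
theorem SimpleGraph.IsTrackLayout.eq_of_track_eq_of_interleaved {V : Type*} {G : SimpleGraph V}
    {t : ℕ} {track : V → Fin t} {pos : V → ℕ} (hL : G.IsTrackLayout track pos)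
    {d d' a b a' b' : V} (hda : G.Adj d a) (hdb : G.Adj d b) (hda' : G.Adj d' a')
    (hdb' : G.Adj d' b') (hab' : track a = track b') (ha'b : track a' = track b)
    (hlt : pos a < pos b') (hlt' : pos a' < pos b) (hdd' : track d = track d') : d = d' := by
  by_contra hne
  rcases (hL.pos_ne d d' hne hdd').lt_or_gt with h | h
  · exact hL.not_crossing d b d' a' hdb hda' hdd' ha'b.symm ⟨h, hlt'⟩
  · exact hL.not_crossing d' b' d a hdb' hda hdd'.symm hab'.symm ⟨h, hlt⟩

theorem Finset.exists_subset_card_eq_forall_lt_of_injOn {α β : Type*} [DecidableEq α]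
    [LinearOrder β] (key : α → β) {S : Finset α} (hS : Set.InjOn key S) {k : ℕ} (hk : k ≤ #S) :
    ∃ A ⊆ S, #A = k ∧ ∀ a ∈ A, ∀ b ∈ S \ A, key a < key b := by
  induction k with
  | zero => exact ⟨∅, empty_subset _, rfl, by simp⟩
  | succ k ih =>
    obtain ⟨A, hAS, hA, hlt⟩ := ih (by omega)
    have hne : (S \ A).Nonempty := by
      rw [← card_pos, card_sdiff_of_subset hAS]; omega
    obtain ⟨x, hx, hmin⟩ := exists_min_image (S \ A) key hne
    obtain ⟨hxS, hxA⟩ := mem_sdiff.mp hx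
    refine ⟨insert x A, insert_subset hxS hAS, by rw [card_insert_of_notMem hxA, hA], ?_⟩
    intro a ha b hb
    obtain ⟨hbS, hbxA⟩ := mem_sdiff.mp hb
    have hbA : b ∈ S \ A := mem_sdiff.mpr ⟨hbS, fun h => hbxA (mem_insert_of_mem h)⟩
    rcases mem_insert.mp ha with rfl | ha
    · exact (hmin b hbA).lt_of_ne fun h => hbxA (hS hbS hxS h.symm ▸ mem_insert_self _ _)
    · exact hlt a ha b hbA

theorem Nat.sq_lt_four_mul_of_half_mul_lt {m t : ℕ} (h : m / 2 * (m - m / 2) < t) :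
    m ^ 2 < 4 * t := by
  obtain ⟨k, rfl | rfl⟩ := Nat.even_or_odd' m
  · rw [show 2 * k / 2 = k by omega, show 2 * k - k = k by omega] at h
    nlinarith
  · rw [show (2 * k + 1) / 2 = k by omega, show 2 * k + 1 - k = k + 1 by omega] at h
    nlinarith

theorem Real.rpow_two_div_three_le_of_sq_le_pow_three {x y : ℝ} (hx : 0 ≤ x) (hy : 0 ≤ y)
    (h : x ^ 2 ≤ y ^ 3) : x ^ ((2 : ℝ) / 3) ≤ y := by
  have hcube : (x ^ ((2 : ℝ) / 3)) ^ 3 = x ^ 2 := by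
    rw [← Real.rpow_mul_natCast hx]; norm_num
  exact le_of_pow_le_pow_left₀ (by norm_num) hy (hcube ▸ h)

namespace KnSub

variable {n t : ℕ} {f : (Fin n ⊕ {e : Sym2 (Fin n) // ¬ e.IsDiag}) → Fin t}
  {g : (Fin n ⊕ {e : Sym2 (Fin n) // ¬ e.IsDiag}) → ℕ}

theorem adj_inr_inl (e : {e : Sym2 (Fin n) // ¬ e.IsDiag}) {i : Fin n} (hi : i ∈ e.1) :
    (KnSub n).Adj (Sum.inr e) (Sum.inl i) :=
  Or.inr ⟨i, e, rfl, rfl, hi⟩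

/-- The division vertices of the edges `ab`, `a ∈ A`, `b ∈ B`, lie on pairwise distinct tracks
other than `c`. -/
theorem card_mul_card_lt (hL : (KnSub n).IsTrackLayout f g) {c : Fin t} {A B : Finset (Fin n)}
    (hA : ∀ a ∈ A, f (.inl a) = c) (hB : ∀ b ∈ B, f (.inl b) = c)
    (hAB : ∀ a ∈ A, ∀ b ∈ B, g (.inl a) < g (.inl b)) : #A * #B < t := by
  have hne : ∀ p : ↥(A ×ˢ B), ¬ (s(p.1.1, p.1.2)).IsDiag := fun ⟨⟨a, b⟩, hp⟩ => by
    obtain ⟨ha, hb⟩ := mem_product.mp hp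
    rw [Sym2.mk_isDiag_iff]
    intro hab
    exact (hAB a ha b hb).ne (by rw [show a = b from hab])
  let d : ↥(A ×ˢ B) → Fin n ⊕ {e : Sym2 (Fin n) // ¬ e.IsDiag} :=
    fun p => .inr ⟨s(p.1.1, p.1.2), hne p⟩
  have hd_ne : ∀ p, f (d p) ≠ c := fun ⟨⟨a, _⟩, hp⟩ =>
    (hA a (mem_product.mp hp).1) ▸ hL.track_ne _ _ (adj_inr_inl _ (Sym2.mem_mk_left a _))
  have hd_inj : Function.Injective (f ∘ d) := by
    rintro ⟨⟨a, b⟩, hp⟩ ⟨⟨a', b'⟩, hp'⟩ hfd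
    obtain ⟨ha, hb⟩ := mem_product.mp hp
    obtain ⟨ha', hb'⟩ := mem_product.mp hp'
    have hdd' := hL.eq_of_track_eq_of_interleaved (adj_inr_inl _ (Sym2.mem_mk_left a b))
      (adj_inr_inl _ (Sym2.mem_mk_right a b)) (adj_inr_inl _ (Sym2.mem_mk_left a' b'))
      (adj_inr_inl _ (Sym2.mem_mk_right a' b')) ((hA a ha).trans (hB b' hb').symm)
      ((hA a' ha').trans (hB b hb).symm) (hAB a ha b' hb') (hAB a' ha' b hb) hfd
    simp only [Sum.inr.injEq, Subtype.mk.injEq, Sym2.eq_iff] at hdd'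
    rcases hdd' with ⟨rfl, rfl⟩ | ⟨h, -⟩
    · rfl
    · exact ((hAB a ha b' hb').ne (by rw [h])).elim
  calc #A * #B = Fintype.card ↥(A ×ˢ B) := by rw [Fintype.card_coe, card_product]
    _ ≤ Fintype.card {c' // c' ≠ c} :=
      Fintype.card_le_of_injective (fun p => ⟨f (d p), hd_ne p⟩)
        fun p q h => hd_inj (congrArg Subtype.val h)
    _ < Fintype.card (Fin t) := Fintype.card_subtype_lt (x := c) (by simp)
    _ = t := Fintype.card_fin t

theorem card_track_sq_lt (hL : (KnSub n).IsTrackLayout f g) (c : Fin t) :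
    #{i | f (.inl i) = c} ^ 2 < 4 * t := by
  set S : Finset (Fin n) := {i | f (.inl i) = c}
  have hS : ∀ i ∈ S, f (.inl i) = c := fun i hi => (mem_filter.mp hi).2
  have hinj : Set.InjOn (fun i => g (.inl i)) S := fun i hi j hj hij => by
    by_contra hne
    exact hL.pos_ne _ _ (by simpa using hne) ((hS i hi).trans (hS j hj).symm) hij
  obtain ⟨A, hAS, hA, hlt⟩ :=
    exists_subset_card_eq_forall_lt_of_injOn _ hinj (Nat.div_le_self #S 2)
  have h := card_mul_card_lt hL (fun a ha => hS a (hAS ha))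
    (fun b hb => hS b (mem_sdiff.mp hb).1) hlt
  rw [card_sdiff_of_subset hAS, hA] at h
  exact Nat.sq_lt_four_mul_of_half_mul_lt h

theorem sq_le_four_mul_pow_three (hL : (KnSub n).IsTrackLayout f g) : n ^ 2 ≤ 4 * t ^ 3 := by
  rcases Nat.eq_zero_or_pos n with rfl | hn
  · simp
  have ht : 0 < t := (f (.inl ⟨0, hn⟩)).pos
  have : NeZero t := ⟨ht.ne'⟩
  obtain ⟨c, hc⟩ := Fintype.exists_le_card_fiber_of_nsmul_le_card (fun i : Fin n => f (.inl i))
    (b := (n : ℝ) / t) (by rw [Fintype.card_fin, Fintype.card_fin, nsmul_eq_mul,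
      mul_div_cancel₀ _ (by positivity)])
  have hnm : n ≤ t * #{i | f (.inl i) = c} := by
    rw [div_le_iff₀ (by positivity)] at hc
    exact_mod_cast (mul_comm _ (t : ℝ)) ▸ hc
  calc n ^ 2 ≤ t ^ 2 * #{i | f (.inl i) = c} ^ 2 := by rw [← mul_pow]; gcongr
    _ ≤ t ^ 2 * (4 * t) := by gcongr; exact (card_track_sq_lt hL c).le
    _ = 4 * t ^ 3 := by ring

end KnSub

/-- Every track layout of `K_n'` uses at least `(n/2)^(2/3)` tracks. -/
theorem KnSub_track_lower_bound (n t : ℕ)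
    (f : (Fin n ⊕ {e : Sym2 (Fin n) // ¬ e.IsDiag}) → Fin t)
    (g : (Fin n ⊕ {e : Sym2 (Fin n) // ¬ e.IsDiag}) → ℕ)
    (hproper : ∀ v w, (KnSub n).Adj v w → f v ≠ f w)
    (hinj : ∀ v w, v ≠ w → f v = f w → g v ≠ g w)
    (hX : ∀ v w x y, (KnSub n).Adj v w → (KnSub n).Adj x y →
      f v = f x → f w = f y → ¬ (g v < g x ∧ g y < g w)) :
    ((n : ℝ) / 2) ^ ((2 : ℝ)/3) ≤ (t : ℝ) := by
  have h : n ^ 2 ≤ 4 * t ^ 3 := KnSub.sq_le_four_mul_pow_three ⟨hproper, hinj, hX⟩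
  refine Real.rpow_two_div_three_le_of_sq_le_pow_three (by positivity) (by positivity) ?_
  have hR : (n : ℝ) ^ 2 ≤ 4 * (t : ℝ) ^ 3 := by exact_mod_cast h
  linarith [show ((n : ℝ) / 2) ^ 2 = (n : ℝ) ^ 2 / 4 by ring]
end

section
/- The 1-subdivision K_n' of the complete graph K_n has a track layout with at most p² + 1 + 2·(p choose 2) tracks, where p = ⌈n^{1/3}⌉; in particular the track-number of K_n' is O(n^{2/3}). -/
/-!
Write each vertex `i < n ≤ p³` of `K_n` in base `p` as `i = p·q + r` with `q < p²` and `r < p`.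
The original vertices with the same `q` form a track, ordered by `r`. The division vertex of an
edge `xy` with `x < y` goes to one common track if `r x = r y`, and otherwise to the track of the
ordered pair `(r x, r y)`; this gives `p² + 1 + 2·C(p,2)` tracks. Division vertices are ordered
lexicographically by `(r x, q x, q y)`, with the `q`-part reversed when `r x < r y`. The reversal
is what excludes X-crossings: on a track `(a, b)` with `a < b`, an original track `Q` is reached
at its residue-`a` vertex by the edges with `q x = Q ≤ q y`, and at its residue-`b` vertex by
those with `q x ≤ Q = q y`; the reversed order lists the former first.
-/

variable {V T T' α β : Type*}

def IsTrackLayout [LT α] (G : SimpleGraph V) (track : V → T) (pos : V → α) : Prop :=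
  (∀ v w, G.Adj v w → track v ≠ track w) ∧
  (∀ v w, v ≠ w → track v = track w → pos v ≠ pos w) ∧
  (∀ v w x y, G.Adj v w → G.Adj x y → track v = track x → track w = track y →
    ¬ (pos v < pos x ∧ pos y < pos w))

namespace IsTrackLayout

variable {G : SimpleGraph V} {track : V → T} {pos : V → α}

theorem comp_track [LT α] (h : IsTrackLayout G track pos) {e : T → T'}
    (he : e.Injective) : IsTrackLayout G (e ∘ track) pos := by
  obtain ⟨hcol, hinj, hcross⟩ := h
  exact ⟨fun v w hvw => he.ne (hcol v w hvw), fun v w hvw ht => hinj v w hvw (he ht),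
    fun v w x y hvw hxy h1 h2 => hcross v w x y hvw hxy (he h1) (he h2)⟩

theorem comp_pos [LinearOrder α] [Preorder β] (h : IsTrackLayout G track pos) {e : α → β}
    (he : StrictMono e) : IsTrackLayout G track (e ∘ pos) := by
  obtain ⟨hcol, hinj, hcross⟩ := h
  refine ⟨hcol, fun v w hvw ht => he.injective.ne (hinj v w hvw ht), ?_⟩
  simpa only [Function.comp_apply, he.lt_iff_lt] using hcross

theorem exists_fin_nat [Fintype T] [Fintype α] [LinearOrder α] {N : ℕ}
    (h : IsTrackLayout G track pos) (hN : Fintype.card T = N) :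
    ∃ (track' : V → Fin N) (pos' : V → ℕ), IsTrackLayout G track' pos' :=
  ⟨_, _, (h.comp_track (Fintype.equivFinOfCardEq hN).injective).comp_pos
    (Fin.val_strictMono.comp (monoEquivOfFin α rfl).symm.strictMono)⟩

end IsTrackLayout

theorem Fintype.card_subtype_fst_ne_snd {R : Type*} [Fintype R] [DecidableEq R] :
    Fintype.card {ab : R × R // ab.1 ≠ ab.2} = 2 * (Fintype.card R).choose 2 := by
  have hoff : ({ab | ab.1 ≠ ab.2} : Finset (R × R)) = (Finset.univ : Finset R).offDiag := by
    ext; simp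
  have h2 := Nat.descFactorial_eq_factorial_mul_choose (Fintype.card R) 2
  rw [Fintype.card_subtype, hoff, Finset.offDiag_card, Finset.card_univ]
  simpa [Nat.descFactorial, Nat.mul_sub, mul_comm] using h2

theorem Sym2.eq_inf_or_eq_sup_of_mem {R : Type*} [LinearOrder R] {x : R} {e : Sym2 R}
    (h : x ∈ e) : x = e.inf ∨ x = e.sup := by
  induction e using Sym2.ind with
  | _ a b =>
    rcases Sym2.mem_iff.1 h with rfl | rfl
    · rcases le_total x b with hab | hab <;> simp [hab]
    · rcases le_total a x with hab | hab <;> simp [hab]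

theorem Fin.strictMono_toLex_divNat_modNat {m p : ℕ} :
    StrictMono fun i : Fin (m * p) => toLex (i.divNat, i.modNat) := by
  intro i j hij
  rw [Prod.Lex.toLex_lt_toLex', Fin.le_def, Fin.lt_def, Fin.ext_iff]
  simp only [Fin.coe_divNat, Fin.coe_modNat]
  refine ⟨Nat.div_le_div_right hij.le, fun hdiv => ?_⟩
  have hi := Nat.div_add_mod i p
  have hj := Nat.div_add_mod j p
  rw [hdiv] at hi
  omega

theorem le_ceil_rpow_inv_pow (n k : ℕ) (hk : k ≠ 0) : n ≤ ⌈(n : ℝ) ^ (k : ℝ)⁻¹⌉₊ ^ k := by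
  have h : (n : ℝ) ≤ (⌈(n : ℝ) ^ (k : ℝ)⁻¹⌉₊ : ℝ) ^ k :=
    calc (n : ℝ) = ((n : ℝ) ^ (k : ℝ)⁻¹) ^ k := (Real.rpow_inv_natCast_pow n.cast_nonneg hk).symm
      _ ≤ _ := pow_le_pow_left₀ (by positivity) (Nat.le_ceil _) k
  exact_mod_cast h

namespace KnSub

variable {n m : ℕ} {R : Type*} [LinearOrder R] (q : Fin n → Fin m) (r : Fin n → R)

def divTrack (e : Sym2 (Fin n)) : Unit ⊕ {ab : R × R // ab.1 ≠ ab.2} :=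
  if h : r e.inf = r e.sup then .inl () else .inr ⟨(r e.inf, r e.sup), h⟩

def divPos (e : Sym2 (Fin n)) : R ×ₗ Fin m ×ₗ Fin m :=
  if r e.inf < r e.sup then toLex (r e.inf, toLex ((q e.inf).rev, (q e.sup).rev))
  else toLex (r e.inf, toLex (q e.inf, q e.sup))

def track :
    Fin n ⊕ {e : Sym2 (Fin n) // ¬ e.IsDiag} → Fin m ⊕ Unit ⊕ {ab : R × R // ab.1 ≠ ab.2} :=
  Sum.elim (fun i => .inl (q i)) (fun e => .inr (divTrack r e.1))

def pos : Fin n ⊕ {e : Sym2 (Fin n) // ¬ e.IsDiag} → R ×ₗ Fin m ×ₗ Fin m :=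
  Sum.elim (fun i => toLex (r i, toLex (q i, q i))) (fun e => divPos q r e.1)

variable {q r}

theorem divPos_fst (e : Sym2 (Fin n)) : (ofLex (divPos q r e)).1 = r e.inf := by
  unfold divPos; split_ifs <;> rfl

theorem eq_of_divTrack_eq_of_divPos_eq (hqr : StrictMono fun i => toLex (q i, r i))
    {e e' : Sym2 (Fin n)} (ht : divTrack r e = divTrack r e')
    (hp : divPos q r e = divPos q r e') : e = e' := by
  have hinf : r e.inf = r e'.inf := by
    simpa only [divPos_fst] using congrArg (fun a => (ofLex a).1) hp
  have hsup : r e.sup = r e'.sup := by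
    unfold divTrack at ht
    split_ifs at ht with h h'
    · rw [← h, ← h', hinf]
    · exact (by simpa using ht : _ ∧ _).2
  have hq : q e.inf = q e'.inf ∧ q e.sup = q e'.sup := by
    unfold divPos at hp
    rw [hinf, hsup] at hp
    split_ifs at hp <;> simpa using hp
  rw [← Sym2.inf_eq_inf_and_sup_eq_sup]
  exact ⟨hqr.injective (by simp [hq.1, hinf]), hqr.injective (by simp [hq.2, hsup])⟩

theorem divPos_le_of_mem (hqr : StrictMono fun i => toLex (q i, r i))
    {i i' : Fin n} {e e' : Sym2 (Fin n)} (hi : i ∈ e) (hi' : i' ∈ e') (hq : q i = q i')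
    (ht : divTrack r e = divTrack r e') (hr : r i < r i') :
    divPos q r e ≤ divPos q r e' := by
  have hmono : ∀ {x y : Fin n}, x ≤ y → q x ≤ q y ∧ (q x = q y → r x ≤ r y) :=
    fun h => Prod.Lex.toLex_le_toLex'.1 (hqr.monotone h)
  obtain ⟨hq₁, hr₁⟩ := hmono e.inf_le_sup
  obtain ⟨hq₁', -⟩ := hmono e'.inf_le_sup
  unfold divTrack at ht
  split_ifs at ht with hrr hrr'
  · suffices hlt : r e.inf < r e'.inf by
      refine le_of_lt (Prod.Lex.lt_iff.2 (Or.inl ?_))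
      simpa only [divPos_fst] using hlt
    rcases Sym2.eq_inf_or_eq_sup_of_mem hi with rfl | rfl <;>
      rcases Sym2.eq_inf_or_eq_sup_of_mem hi' with rfl | rfl <;>
      simp_all
  · obtain ⟨hinf, hsup⟩ : r e.inf = r e'.inf ∧ r e.sup = r e'.sup := by simpa using ht
    unfold divPos
    rcases Sym2.eq_inf_or_eq_sup_of_mem hi with rfl | rfl <;>
      rcases Sym2.eq_inf_or_eq_sup_of_mem hi' with rfl | rfl
    · exact absurd hr (by rw [hinf]; exact lt_irrefl _)
    · have hlt : r e.inf < r e.sup := hsup ▸ hr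
      rw [if_pos hlt, if_pos (hinf ▸ hsup ▸ hlt), Prod.Lex.toLex_le_toLex',
        Prod.Lex.toLex_le_toLex', Fin.rev_le_rev, Fin.rev_le_rev]
      exact ⟨hinf.le, fun _ => ⟨hq ▸ hq₁', fun _ => hq ▸ hq₁⟩⟩
    · have hgt : r e.sup < r e.inf := hinf ▸ hr
      have hqlt : q e.inf < q e'.inf :=
        hq ▸ lt_of_le_of_ne hq₁ fun h => (hr₁ h).not_gt hgt
      rw [if_neg hgt.not_gt, if_neg (hinf ▸ hsup ▸ hgt.not_gt), Prod.Lex.toLex_le_toLex',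
        Prod.Lex.toLex_le_toLex']
      exact ⟨hinf.le, fun _ => ⟨hqlt.le, fun h => absurd h hqlt.ne⟩⟩
    · exact absurd hr (by rw [hsup]; exact lt_irrefl _)

theorem isTrackLayout (hqr : StrictMono fun i => toLex (q i, r i)) :
    IsTrackLayout (KnSub n) (track q r) (pos q r) := by
  have hpos : ∀ {i i' : Fin n}, q i = q i' →
      pos q r (.inl i) < pos q r (.inl i') → r i < r i' := by
    intro i i' hq hlt
    simpa [pos, hq, Prod.Lex.toLex_lt_toLex] using hlt
  refine ⟨?_, ?_, ?_⟩
  · rintro v w (⟨i, e, rfl, rfl, -⟩ | ⟨i, e, rfl, rfl, -⟩)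
    · exact Sum.inl_ne_inr
    · exact Sum.inr_ne_inl
  · rintro (i | e) (i' | e') hne ht hp
    · simp only [track, pos, Sum.elim_inl, Sum.inl.injEq, EmbeddingLike.apply_eq_iff_eq,
        Prod.mk.injEq, and_self] at ht hp
      exact hne (congrArg _ (hqr.injective (by simp [ht, hp.1])))
    · exact Sum.inl_ne_inr ht
    · exact Sum.inr_ne_inl ht
    · exact hne (congrArg Sum.inr (Subtype.ext
        (eq_of_divTrack_eq_of_divPos_eq hqr (Sum.inr_injective ht) hp)))
  · rintro v w x y (⟨i, e, rfl, rfl, hi⟩ | ⟨i, e, rfl, rfl, hi⟩)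
      (⟨i', e', rfl, rfl, hi'⟩ | ⟨i', e', rfl, rfl, hi'⟩) ht ht' ⟨hlt, hlt'⟩
    · exact (divPos_le_of_mem hqr hi hi' (Sum.inl_injective ht)
        (Sum.inr_injective ht') (hpos (Sum.inl_injective ht) hlt)).not_gt hlt'
    · exact Sum.inl_ne_inr ht
    · exact Sum.inr_ne_inl ht
    · exact (divPos_le_of_mem hqr hi' hi (Sum.inl_injective ht').symm
        (Sum.inr_injective ht).symm (hpos (Sum.inl_injective ht').symm hlt')).not_gt hlt

end KnSub

/-- `K_n'` has a track layout with at most `p² + 1 + 2·C(p,2)` tracks, where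
`p = ⌈n^(1/3)⌉`; in particular its track-number is `O(n^(2/3))`. -/
theorem KnSub_track_upper_bound (n : ℕ) :
    ∃ (f : (Fin n ⊕ {e : Sym2 (Fin n) // ¬ e.IsDiag}) →
        Fin ((⌈(n : ℝ) ^ ((1 : ℝ)/3)⌉₊) ^ 2 + 1 + 2 * (⌈(n : ℝ) ^ ((1 : ℝ)/3)⌉₊).choose 2))
      (g : (Fin n ⊕ {e : Sym2 (Fin n) // ¬ e.IsDiag}) → ℕ),
      (∀ v w, (KnSub n).Adj v w → f v ≠ f w) ∧
      (∀ v w, v ≠ w → f v = f w → g v ≠ g w) ∧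
      (∀ v w x y, (KnSub n).Adj v w → (KnSub n).Adj x y →
        f v = f x → f w = f y → ¬ (g v < g x ∧ g y < g w)) := by
  set p := ⌈(n : ℝ) ^ ((1 : ℝ)/3)⌉₊
  have hn : n ≤ p ^ 2 * p := by
    simpa [p, ← pow_succ, one_div] using le_ceil_rpow_inv_pow n 3 three_ne_zero
  have hcard : Fintype.card (Fin (p ^ 2) ⊕ Unit ⊕ {ab : Fin p × Fin p // ab.1 ≠ ab.2}) =
      p ^ 2 + 1 + 2 * p.choose 2 := by
    rw [Fintype.card_sum, Fintype.card_sum, Fintype.card_subtype_fst_ne_snd, Fintype.card_fin,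
      Fintype.card_unit, Fintype.card_fin, add_assoc]
  exact (KnSub.isTrackLayout
    (Fin.strictMono_toLex_divNat_modNat.comp (Fin.strictMono_castLE hn))).exists_fin_nat hcard
end

section
/- Let {V_i : i ∈ ℤ} be a track layout of a dag G such that for every arc (v,w) with v ∈ V_i and w ∈ V_j we have i < j ≤ i + s. Then the vertex ordering obtained by concatenating the tracks in order (..., V_{-1}, V_0, V_1, ...) is a topological ordering of G in which arcs of equal span are pairwise non-nested; hence G has an upward s-queue layout, so the upward queue-number of G is at most s. -/
/-!
Order the vertices lexicographically by (track, position in track) and number them by rank.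
Every arc goes to a strictly higher track, so this order is topological. Two arcs `vw`, `xy` of
equal span can only nest if they leave the same track and enter the same track, and then the
nesting is an X-crossing. So putting each arc into the queue indexed by its span (`1, …, s`)
gives an upward `s`-queue layout.
-/

open Function

theorem exists_nat_rank_of_injective {V α : Type*} [Fintype V] [LinearOrder α] (e : V → α)
    (he : Injective e) : ∃ σ : V → ℕ, Injective σ ∧ ∀ v w, σ v < σ w ↔ e v < e w := by
  let _ : LinearOrder V := LinearOrder.lift' e he
  let rank := (Fintype.orderIsoFinOfCardEq V rfl).symm
  exact ⟨fun v => rank v, Fin.val_injective.comp rank.injective,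
    fun v w => Fin.lt_def.symm.trans rank.lt_iff_lt⟩

section TrackLayout

variable {V : Type*} (f : V → ℤ) (g : V → ℕ)

/-- The position of a vertex in the concatenation of the tracks: track `f v`, place `g v`. -/
def trackKey (v : V) : ℤ ×ₗ ℕ := toLex (f v, g v)

variable {f g}

theorem trackKey_lt_iff {v w : V} :
    trackKey f g v < trackKey f g w ↔ f v < f w ∨ f v = f w ∧ g v < g w :=
  Prod.Lex.toLex_lt_toLex

theorem trackKey_injective (hinj : ∀ v w, v ≠ w → f v = f w → g v ≠ g w) :
    Injective (trackKey f g) := by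
  intro v w hvw
  by_contra hne
  have hfg := Prod.ext_iff.1 (toLex.injective hvw)
  exact hinj v w hne hfg.1 hfg.2

theorem not_nested_of_span_eq {A : V → V → Prop}
    (hX : ∀ v w x y, A v w → A x y → f v = f x → f w = f y → ¬ (g v < g x ∧ g y < g w))
    {v w x y : V} (hvw : A v w) (hxy : A x y) (hspan : f w - f v = f y - f x) :
    ¬ (trackKey f g v < trackKey f g x ∧ trackKey f g y < trackKey f g w) := by
  rintro ⟨hvx, hyw⟩
  rcases trackKey_lt_iff.1 hvx with hvx | ⟨hfvx, hgvx⟩ <;>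
    rcases trackKey_lt_iff.1 hyw with hyw | ⟨hfyw, hgyw⟩
  · omega
  · omega
  · omega
  · exact hX v w x y hvw hxy hfvx hfyw.symm ⟨hgvx, hgyw⟩

end TrackLayout

theorem wrap_to_upward_queue_layout_general {V : Type*} [Fintype V]
    (A : V → V → Prop) (s : ℕ) (f : V → ℤ) (g : V → ℕ)
    (hinj : ∀ v w, v ≠ w → f v = f w → g v ≠ g w)
    (hX : ∀ v w x y, (A v w ∨ A w v) → (A x y ∨ A y x) →
      f v = f x → f w = f y → ¬ (g v < g x ∧ g y < g w))
    (hspan : ∀ v w, A v w → f v < f w ∧ f w ≤ f v + s) :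
    (∀ v w, A v w → (f v < f w ∨ (f v = f w ∧ g v < g w))) ∧
    (∀ v w x y, A v w → A x y → f w - f v = f y - f x →
      ¬ ((f v < f x ∨ (f v = f x ∧ g v < g x)) ∧
         (f y < f w ∨ (f y = f w ∧ g y < g w)))) ∧
    ∃ (σ : V → ℕ) (q : ∀ v w, A v w → Fin s),
      Function.Injective σ ∧ (∀ v w, A v w → σ v < σ w) ∧
      ∀ v w x y (hvw : A v w) (hxy : A x y), q v w hvw = q x y hxy →
        ¬ (σ v < σ x ∧ σ y < σ w) := by
  have topological v w (h : A v w) : trackKey f g v < trackKey f g w :=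
    trackKey_lt_iff.2 (.inl (hspan v w h).1)
  have nonnested v w x y (hvw : A v w) (hxy : A x y) (hsp : f w - f v = f y - f x) :=
    not_nested_of_span_eq (fun v w x y h h' => hX v w x y (.inl h) (.inl h')) hvw hxy hsp
  obtain ⟨σ, hσinj, hσ⟩ := exists_nat_rank_of_injective (trackKey f g) (trackKey_injective hinj)
  refine ⟨fun v w h => trackKey_lt_iff.1 (topological v w h),
    fun v w x y hvw hxy hsp => by simpa only [trackKey_lt_iff] using nonnested v w x y hvw hxy hsp,
    σ, fun v w h => ⟨(f w - f v - 1).toNat, by have := hspan v w h; omega⟩,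
    hσinj, fun v w h => (hσ v w).2 (topological v w h), ?_⟩
  rintro v w x y hvw hxy hq ⟨hvx, hyw⟩
  have hq : (f w - f v - 1).toNat = (f y - f x - 1).toNat := congrArg Fin.val hq
  have := hspan v w hvw
  have := hspan x y hxy
  exact nonnested v w x y hvw hxy (by omega) ⟨(hσ v x).1 hvx, (hσ y w).1 hyw⟩

/-- Wrapping lemma: given a track layout of a dag indexed by `ℤ` in which every
arc has span at most `s` (pointing to a higher track), the concatenated track
ordering is topological, arcs of equal span are pairwise non-nested, and the
dag has an upward `s`-queue layout. -/
theorem wrap_to_upward_queue_layout {V : Type*} [Fintype V]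
    (A : V → V → Prop) (s : ℕ) (f : V → ℤ) (g : V → ℕ)
    (hproper : ∀ v w, (A v w ∨ A w v) → f v ≠ f w)
    (hinj : ∀ v w, v ≠ w → f v = f w → g v ≠ g w)
    (hX : ∀ v w x y, (A v w ∨ A w v) → (A x y ∨ A y x) →
      f v = f x → f w = f y → ¬ (g v < g x ∧ g y < g w))
    (hspan : ∀ v w, A v w → f v < f w ∧ f w ≤ f v + s) :
    (∀ v w, A v w → (f v < f w ∨ (f v = f w ∧ g v < g w))) ∧
    (∀ v w x y, A v w → A x y → f w - f v = f y - f x →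
      ¬ ((f v < f x ∨ (f v = f x ∧ g v < g x)) ∧
         (f y < f w ∨ (f y = f w ∧ g y < g w)))) ∧
    ∃ (σ : V → ℕ) (q : ∀ v w, A v w → Fin s),
      Function.Injective σ ∧ (∀ v w, A v w → σ v < σ w) ∧
      ∀ v w x y (hvw : A v w) (hxy : A x y), q v w hvw = q x y hxy →
        ¬ (σ v < σ x ∧ σ y < σ w) :=
  wrap_to_upward_queue_layout_general A s f g hinj hX hspan
end

section
/- Let G be a dag with an upward (k,t)-track layout. Then G has an upward k·(t choose 2)-queue layout: order the vertices by any topological ordering of G⁺ (which preserves each track order); then, for each colour and each pair of tracks, the arcs of that colour between that pair of tracks form a queue. -/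
/-!
A topological ordering `σ` of `G⁺` restricted to a track is the track order, so two arcs of the
same colour nested in `σ` either join the same ordered pair of tracks, where the nesting is an
X-crossing in the track layout, or join the same two tracks in opposite directions, where the
arc `x → y` inside `v → w` gives `σ v < σ y` and `σ x < σ w` and again an X-crossing. Hence the
arcs of one colour between one unordered pair of tracks form a queue.
-/

section TrackOrder

variable {V ι : Type*} {f : V → ι} {g σ : V → ℕ}

theorem lt_of_sameTrack_of_lt (hinj : ∀ v w, v ≠ w → f v = f w → g v ≠ g w)
    (htrack : ∀ v w, f v = f w → g v < g w → σ v < σ w) {a b : V} (hf : f a = f b)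
    (hs : σ a < σ b) : g a < g b :=
  lt_of_le_of_ne (not_lt.1 fun h => (htrack b a hf.symm h).asymm hs)
    (hinj a b (ne_of_apply_ne σ hs.ne) hf)

variable (hinj : ∀ v w, v ≠ w → f v = f w → g v ≠ g w)
  (htrack : ∀ v w, f v = f w → g v < g w → σ v < σ w) {v w x y : V}
include hinj htrack

theorem not_nested_of_parallel (hvx : f v = f x) (hwy : f w = f y)
    (hX : ¬ (g v < g x ∧ g y < g w)) : ¬ (σ v < σ x ∧ σ y < σ w) := fun ⟨hs₁, hs₂⟩ =>
  hX ⟨lt_of_sameTrack_of_lt hinj htrack hvx hs₁, lt_of_sameTrack_of_lt hinj htrack hwy.symm hs₂⟩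

theorem not_nested_of_antiparallel (hxy : σ x < σ y) (hvy : f v = f y) (hwx : f w = f x)
    (hX : ¬ (g v < g y ∧ g x < g w)) : ¬ (σ v < σ x ∧ σ y < σ w) := fun ⟨hs₁, hs₂⟩ =>
  hX ⟨lt_of_sameTrack_of_lt hinj htrack hvy (hs₁.trans hxy),
    lt_of_sameTrack_of_lt hinj htrack hwx.symm (hxy.trans hs₂)⟩

end TrackOrder

section QueueIndex

variable {V : Type*} {A : V → V → Prop} {k t : ℕ}

noncomputable def offDiagSym2EquivFin (t : ℕ) :
    {s : Sym2 (Fin t) // ¬ s.IsDiag} ≃ Fin (t.choose 2) :=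
  Fintype.equivFinOfCardEq (by rw [Sym2.card_subtype_not_diag, Fintype.card_fin])

noncomputable def queueIndex (f : V → Fin t) (col : V → V → Fin k)
    (hproper : ∀ v w, A v w → f v ≠ f w) (v w : V) (hvw : A v w) : Fin (k * t.choose 2) :=
  finProdFinEquiv (col v w, offDiagSym2EquivFin t
    ⟨s(f v, f w), by simpa [Sym2.mk_isDiag_iff] using hproper v w hvw⟩)

theorem queueIndex_eq_iff {f : V → Fin t} {col : V → V → Fin k}
    {hproper : ∀ v w, A v w → f v ≠ f w} {v w x y : V} {hvw : A v w} {hxy : A x y} :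
    queueIndex f col hproper v w hvw = queueIndex f col hproper x y hxy ↔
      col v w = col x y ∧ s(f v, f w) = s(f x, f y) := by
  simp [queueIndex, finProdFinEquiv.apply_eq_iff_eq, (offDiagSym2EquivFin t).apply_eq_iff_eq]

end QueueIndex

theorem upward_track_to_queue_general {V : Type*} (A : V → V → Prop) (k t : ℕ)
    (f : V → Fin t) (g : V → ℕ) (col : V → V → Fin k)
    (hproper : ∀ v w, A v w → f v ≠ f w)
    (hinj : ∀ v w, v ≠ w → f v = f w → g v ≠ g w)
    (hX : ∀ v w x y, A v w → A x y → col v w = col x y →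
      (f v = f x → f w = f y → ¬ (g v < g x ∧ g y < g w)) ∧
      (f v = f y → f w = f x → ¬ (g v < g y ∧ g x < g w)))
    (σ : V → ℕ)
    (htopo : ∀ v w, A v w → σ v < σ w)
    (htrack : ∀ v w, f v = f w → g v < g w → σ v < σ w) :
    (∀ v w x y, A v w → A x y → col v w = col x y → f v = f x → f w = f y →
      ¬ (σ v < σ x ∧ σ y < σ w)) ∧
    ∃ q : ∀ v w, A v w → Fin (k * t.choose 2),
      ∀ v w x y (hvw : A v w) (hxy : A x y), q v w hvw = q x y hxy →
        ¬ (σ v < σ x ∧ σ y < σ w) := by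
  refine ⟨fun v w x y hvw hxy hc hvx hwy =>
    not_nested_of_parallel hinj htrack hvx hwy ((hX v w x y hvw hxy hc).1 hvx hwy),
    queueIndex f col hproper, fun v w x y hvw hxy hq => ?_⟩
  obtain ⟨hc, htracks⟩ := queueIndex_eq_iff.1 hq
  rcases Sym2.eq_iff.1 htracks with ⟨hvx, hwy⟩ | ⟨hvy, hwx⟩
  · exact not_nested_of_parallel hinj htrack hvx hwy ((hX v w x y hvw hxy hc).1 hvx hwy)
  · exact not_nested_of_antiparallel hinj htrack (htopo x y hxy) hvy hwx
      ((hX v w x y hvw hxy hc).2 hvy hwx)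

/-- From an upward `(k,t)`-track layout to an upward `k·C(t,2)`-queue layout:
in any topological ordering of `G⁺` (i.e. a topological ordering of `G` that
preserves each track order), for each arc colour and each pair of tracks the
arcs of that colour between those tracks form a queue; hence `G` has an upward
`k·(t choose 2)`-queue layout. -/
theorem upward_track_to_queue {V : Type*} (A : V → V → Prop) (k t : ℕ)
    (f : V → Fin t) (g : V → ℕ) (col : V → V → Fin k)
    (hproper : ∀ v w, A v w → f v ≠ f w)
    (hinj : ∀ v w, v ≠ w → f v = f w → g v ≠ g w)
    (hX : ∀ v w x y, A v w → A x y → col v w = col x y →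
      (f v = f x → f w = f y → ¬ (g v < g x ∧ g y < g w)) ∧
      (f v = f y → f w = f x → ¬ (g v < g y ∧ g x < g w)))
    (σ : V → ℕ) (hσ : Function.Injective σ)
    (htopo : ∀ v w, A v w → σ v < σ w)
    (htrack : ∀ v w, f v = f w → g v < g w → σ v < σ w) :
    (∀ v w x y, A v w → A x y → col v w = col x y → f v = f x → f w = f y →
      ¬ (σ v < σ x ∧ σ y < σ w)) ∧
    ∃ q : ∀ v w, A v w → Fin (k * t.choose 2),
      ∀ v w x y (hvw : A v w) (hxy : A x y), q v w hvw = q x y hxy →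
        ¬ (σ v < σ x ∧ σ y < σ w) :=
  upward_track_to_queue_general A k t f g col hproper hinj hX σ htopo htrack
end

section
/- Every tree dag T has a track layout {V_i : i ∈ ℤ} of its underlying tree such that for every arc (v,w) of T, if v ∈ V_i and w ∈ V_j then i < j ≤ i + 2. Consequently every tree dag has an upward 5-track layout and an upward 2-queue layout. -/
/-!
Root the tree at `r` and put each vertex `v` on track `level v`, the sum along the path from `r`
to `v` of `+1` for every arc traversed forwards and `-2` for every arc traversed backwards. An arc
then rises by one track if it points away from the root and by two if it points towards it.
Order every track breadth-first. A step from parent to child changes the track by `1` or `-2`,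
a step from child to parent by `-1` or `2`; so two edges between the same pair of tracks have
their parents on the same track, and breadth-first order of children follows that of parents:
there is no X-crossing.

As edges span at most two tracks, reducing track indices modulo `5` keeps the layout valid, and
ordering all vertices by (track, position) is topological. In that order two arcs of the same
span cannot nest, so the arcs of span one and those of span two form two queues.
-/

open SimpleGraph

theorem List.Lex.append_of_length_eq {α : Type*} {r : α → α → Prop} {l₁ l₂ : List α}
    (h : List.Lex r l₁ l₂) (hl : l₁.length = l₂.length) (t₁ t₂ : List α) :
    List.Lex r (l₁ ++ t₁) (l₂ ++ t₂) := by
  induction h with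
  | nil => simp at hl
  | rel hab => exact .rel hab
  | cons _ ih => exact .cons (ih (by simpa using hl))

theorem Finite.exists_nat_lt_iff_lt {V α : Type*} [Finite V] [LinearOrder α] (k : V → α) :
    ∃ g : V → ℕ, ∀ a b, g a < g b ↔ k a < k b := by
  refine ⟨fun v => {u | k u < k v}.ncard, fun a b => ⟨fun h => ?_, fun h => ?_⟩⟩
  · by_contra hba
    exact (Set.ncard_le_ncard (fun u hu => lt_of_lt_of_le hu (not_lt.mp hba))
      (Set.toFinite _)).not_gt h
  · exact Set.ncard_lt_ncard ⟨fun u hu => lt_trans hu h, fun hsub => lt_irrefl _ (hsub h)⟩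
      (Set.toFinite _)

theorem eq_of_lt_iff_lt {V α β : Type*} [LinearOrder α] [Preorder β] {k : V → α} {g : V → β}
    (hg : ∀ a b, g a < g b ↔ k a < k b) {a b : V} (h : g a = g b) : k a = k b :=
  le_antisymm (not_lt.mp fun hba => ((hg b a).mpr hba).ne' h)
    (not_lt.mp fun hab => ((hg a b).mpr hab).ne h)

namespace SimpleGraph

variable {V ι α : Type*} {G : SimpleGraph V}

theorem IsAcyclic.eq_concat_or_eq_concat (hG : G.IsAcyclic) {u v w : V} {p : G.Walk u v}
    {q : G.Walk u w} (hp : p.IsPath) (hq : q.IsPath) (hadj : G.Adj v w) :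
    q = p.concat hadj ∨ p = q.concat hadj.symm := by
  by_cases hv : v ∈ q.support
  · exact .inl (hG.path_concat hp hq hadj hv)
  · exact .inr (hG.path_concat hq hp hadj.symm
      (hG.mem_support_of_ne_mem_support_of_adj_of_isPath hp hq hadj hv))

variable (G) in
def IsTrackLayout_s11 [LT α] (f : V → ι) (k : V → α) : Prop :=
  (∀ v w, G.Adj v w → f v ≠ f w) ∧
  (∀ v w, v ≠ w → f v = f w → k v ≠ k w) ∧
  (∀ v w x y, G.Adj v w → G.Adj x y → f v = f x → f w = f y → ¬ (k v < k x ∧ k y < k w))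

namespace IsTrackLayout_s11

theorem of_lt_iff {β : Type*} [LinearOrder α] [Preorder β] {f : V → ι} {k : V → α} {g : V → β}
    (hL : G.IsTrackLayout_s11 f k) (hg : ∀ a b, g a < g b ↔ k a < k b) : G.IsTrackLayout_s11 f g := by
  refine ⟨hL.1, fun v w hvw hf hgvw => hL.2.1 v w hvw hf (eq_of_lt_iff_lt hg hgvw),
    fun v w x y hvw hxy hv hw => ?_⟩
  rw [hg, hg]
  exact hL.2.2 v w x y hvw hxy hv hw

theorem injective_toLex [LT α] {f : V → ι} {k : V → α} (hL : G.IsTrackLayout_s11 f k) :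
    Function.Injective fun v => toLex (f v, k v) := by
  intro v w h
  by_contra hvw
  simp only [toLex_inj, Prod.mk.injEq] at h
  exact hL.2.1 v w hvw h.1 h.2

theorem not_nested_of_span_eq [LinearOrder α] {f : V → ℤ} {k : V → α}
    (hL : G.IsTrackLayout_s11 f k) {v w x y : V} (hvw : G.Adj v w) (hxy : G.Adj x y)
    (hspan : f w - f v = f y - f x) :
    ¬ (toLex (f v, k v) < toLex (f x, k x) ∧ toLex (f y, k y) < toLex (f w, k w)) := by
  simp only [Prod.Lex.toLex_lt_toLex']
  rintro ⟨⟨hvx, hvx'⟩, ⟨hyw, hyw'⟩⟩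
  have hv : f v = f x := by omega
  have hw : f w = f y := by omega
  exact hL.2.2 v w x y hvw hxy hv hw ⟨hvx' hv, hyw' hw.symm⟩

theorem wrap [LinearOrder α] {f : V → ℤ} {k : V → α} (hL : G.IsTrackLayout_s11 f k) {s : ℤ} {m : ℕ}
    (hspan : ∀ v w, G.Adj v w → |f v - f w| ≤ s) (hm : 2 * s < m) :
    G.IsTrackLayout_s11 (fun v => (f v : ZMod m)) fun v => toLex (f v, k v) := by
  refine ⟨fun v w hvw hvw' => ?_, fun v w hvw _ => hL.injective_toLex.ne hvw, ?_⟩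
  · rw [ZMod.intCast_eq_intCast_iff_dvd_sub] at hvw'
    have hs := abs_le.mp (hspan v w hvw)
    have := Int.eq_zero_of_abs_lt_dvd hvw' (abs_lt.mpr ⟨by linarith, by linarith⟩)
    exact hL.1 v w hvw (by omega)
  simp only [ZMod.intCast_eq_intCast_iff_dvd_sub, Prod.Lex.toLex_lt_toLex']
  rintro v w x y hvw hxy hvx hwy ⟨⟨hvx₁, hvx₂⟩, ⟨hyw₁, hyw₂⟩⟩
  have hs₁ := abs_le.mp (hspan v w hvw)
  have hs₂ := abs_le.mp (hspan x y hxy)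
  have hv : f v = f x := by
    by_contra hne
    have := Int.le_of_dvd (by omega) hvx
    omega
  have hw : f w = f y := by
    have := Int.eq_zero_of_abs_lt_dvd hwy (abs_lt.mpr ⟨by linarith, by linarith⟩)
    omega
  exact hL.2.2 v w x y hvw hxy hv hw ⟨hvx₂ hv, hyw₂ hw.symm⟩

end IsTrackLayout_s11

end SimpleGraph

namespace TreeDag

variable {V : Type*} {G : SimpleGraph V} {r : V} (P : ∀ v, G.Walk r v)

def bfsKey (v : V) : ℕ ×ₗ List V := toLex ((P v).length, (P v).support)

theorem bfsKey_injective : Function.Injective (bfsKey P) := by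
  intro a b h
  have hs : (P a).support = (P b).support := congrArg (fun x => (ofLex x).2) h
  simpa [List.getLast?_eq_some_getLast, Walk.getLast_support] using congrArg List.getLast? hs

theorem bfsKey_lt_bfsKey_of_concat [LinearOrder V] {a b x y : V} {hab : G.Adj a b}
    {hxy : G.Adj x y} (hb : P b = (P a).concat hab) (hy : P y = (P x).concat hxy)
    (h : bfsKey P a < bfsKey P x) : bfsKey P b < bfsKey P y := by
  simp only [bfsKey, Prod.Lex.toLex_lt_toLex, hb, hy, Walk.length_concat, Walk.support_concat]
    at h ⊢
  rcases h with hlt | ⟨heq, hlex⟩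
  · exact .inl (by omega)
  · exact .inr ⟨by omega,
      List.Lex.append_of_length_eq hlex (by simp [Walk.length_support, heq]) _ _⟩

theorem isTrackLayout_bfsKey [LinearOrder V] (hG : G.IsAcyclic) (hP : ∀ v, (P v).IsPath)
    {f : V → ℤ}
    (hf : ∀ a b (hab : G.Adj a b), P b = (P a).concat hab → f b - f a = 1 ∨ f b - f a = -2) :
    G.IsTrackLayout_s11 f (bfsKey P) := by
  have hsplit := fun a b (hab : G.Adj a b) => hG.eq_concat_or_eq_concat (hP a) (hP b) hab
  refine ⟨fun v w hvw => ?_, fun v w hvw _ => (bfsKey_injective P).ne hvw, ?_⟩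
  · rcases hsplit v w hvw with hw | hv
    · have := hf v w hvw hw
      omega
    · have := hf w v hvw.symm hv
      omega
  rintro v w x y hvw hxy hv hw ⟨hvx, hyw⟩
  rcases hsplit v w hvw with hw' | hv' <;> rcases hsplit x y hxy with hy' | hx'
  · exact (bfsKey_lt_bfsKey_of_concat P hw' hy' hvx).asymm hyw
  · have := hf v w hvw hw'
    have := hf y x hxy.symm hx'
    omega
  · have := hf w v hvw.symm hv'
    have := hf x y hxy hy'
    omega
  · exact (bfsKey_lt_bfsKey_of_concat P hx' hv' hyw).asymm hvx

variable (A : V → V → Prop)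

open Classical in
noncomputable def level (v : V) : ℤ :=
  ((P v).darts.map fun d => if A d.fst d.snd then 1 else -2).sum

open Classical in
theorem level_eq_of_concat {a b : V} {hab : G.Adj a b} (hb : P b = (P a).concat hab) :
    level P A b = level P A a + if A a b then 1 else -2 := by
  simp [level, hb, Walk.darts_concat]

theorem level_sub_eq_one_or_neg_two {a b : V} {hab : G.Adj a b} (hb : P b = (P a).concat hab) :
    level P A b - level P A a = 1 ∨ level P A b - level P A a = -2 := by
  rw [level_eq_of_concat P A hb]
  split_ifs <;> simp

theorem level_eq_add_one_or_add_two_of_arc (hG : G.IsAcyclic) (hP : ∀ v, (P v).IsPath)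
    (hA : ∀ v w, G.Adj v w → (A v w ↔ ¬ A w v)) {v w : V} (hvw : G.Adj v w) (h : A v w) :
    level P A w = level P A v + 1 ∨ level P A w = level P A v + 2 := by
  rcases hG.eq_concat_or_eq_concat (hP v) (hP w) hvw with hw | hv
  · rw [level_eq_of_concat P A hw, if_pos h]
    exact .inl rfl
  · rw [level_eq_of_concat P A hv, if_neg ((hA v w hvw).mp h)]
    omega

theorem abs_level_sub_le_two (hG : G.IsAcyclic) (hP : ∀ v, (P v).IsPath) {v w : V}
    (hvw : G.Adj v w) : |level P A v - level P A w| ≤ 2 := by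
  rw [abs_le]
  rcases hG.eq_concat_or_eq_concat (hP v) (hP w) hvw with hw | hv
  · have := level_sub_eq_one_or_neg_two P A hw
    omega
  · have := level_sub_eq_one_or_neg_two P A hv
    omega

end TreeDag

open TreeDag in
/-- Every tree dag (acyclic orientation `A` of a tree `G`) has a track layout
indexed by `ℤ` in which every arc has span one or two; consequently it has an
upward 5-track layout and an upward 2-queue layout. -/
theorem tree_dag_layouts {V : Type*} [Fintype V] (G : SimpleGraph V)
    (hT : G.IsTree) (A : V → V → Prop)
    (hor : ∀ v w, A v w → G.Adj v w)
    (hor2 : ∀ v w, G.Adj v w → (A v w ↔ ¬ A w v)) :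
    (∃ (f : V → ℤ) (g : V → ℕ),
      (∀ v w, G.Adj v w → f v ≠ f w) ∧
      (∀ v w, v ≠ w → f v = f w → g v ≠ g w) ∧
      (∀ v w x y, G.Adj v w → G.Adj x y → f v = f x → f w = f y →
        ¬ (g v < g x ∧ g y < g w)) ∧
      (∀ v w, A v w → f v < f w ∧ f w ≤ f v + 2)) ∧
    (∃ (f : V → Fin 5) (g : V → ℕ),
      (∀ v w, G.Adj v w → f v ≠ f w) ∧
      (∀ v w, v ≠ w → f v = f w → g v ≠ g w) ∧
      (∀ v w x y, G.Adj v w → G.Adj x y → f v = f x → f w = f y →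
        ¬ (g v < g x ∧ g y < g w)) ∧
      (∃ σ : V → ℕ, Function.Injective σ ∧ (∀ v w, A v w → σ v < σ w) ∧
        (∀ v w, f v = f w → g v < g w → σ v < σ w))) ∧
    (∃ (σ : V → ℕ) (q : ∀ v w, A v w → Fin 2),
      Function.Injective σ ∧ (∀ v w, A v w → σ v < σ w) ∧
      ∀ v w x y (hvw : A v w) (hxy : A x y), q v w hvw = q x y hxy →
        ¬ (σ v < σ x ∧ σ y < σ w)) := by
  obtain ⟨r⟩ := hT.connected.nonempty
  let _ : LinearOrder V := LinearOrder.lift' _ (Fintype.equivFin V).injective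
  choose P hP using fun v => (hT.existsUnique_path r v).exists
  set f := level P A
  have hL : G.IsTrackLayout_s11 f (bfsKey P) :=
    isTrackLayout_bfsKey P hT.isAcyclic hP fun _ _ _ hb => level_sub_eq_one_or_neg_two P A hb
  have harc : ∀ v w, A v w → f w = f v + 1 ∨ f w = f v + 2 := fun v w h =>
    level_eq_add_one_or_add_two_of_arc P A hT.isAcyclic hP hor2 (hor v w h) h
  obtain ⟨g, hg⟩ := Finite.exists_nat_lt_iff_lt (bfsKey P)
  obtain ⟨σ, hσ⟩ := Finite.exists_nat_lt_iff_lt fun v => toLex (f v, bfsKey P v)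
  have hσinj : Function.Injective σ := fun v w h => hL.injective_toLex (eq_of_lt_iff_lt hσ h)
  have hσarc : ∀ v w, A v w → σ v < σ w := fun v w h =>
    (hσ v w).mpr (Prod.Lex.toLex_lt_toLex.mpr (.inl (by have := harc v w h; omega)))
  have hLg := hL.of_lt_iff hg
  have hL5 := (hL.wrap (fun _ _ => abs_level_sub_le_two P A hT.isAcyclic hP) (m := 5)
    (by norm_num)).of_lt_iff hσ
  -- `ZMod 5` unfolds to `Fin 5`.
  refine ⟨⟨f, g, hLg.1, hLg.2.1, hLg.2.2, fun v w h => by have := harc v w h; omega⟩,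
    ⟨fun v => (f v : ZMod 5), σ, hL5.1, hL5.2.1, hL5.2.2, σ, hσinj, hσarc, fun _ _ _ => id⟩,
    ⟨σ, fun v w _ => if f w = f v + 1 then 0 else 1, hσinj, hσarc, ?_⟩⟩
  rintro v w x y hvw hxy hq ⟨hvx, hyw⟩
  refine hL.not_nested_of_span_eq (hor v w hvw) (hor x y hxy) ?_
    ⟨(hσ v x).mp hvx, (hσ y w).mp hyw⟩
  have := harc v w hvw
  have := harc x y hxy
  beta_reduce at hq
  split_ifs at hq <;> omega
end

section
/- Let T be a tree that is not a caterpillar, i.e., T contains a 2-claw. Then there exists an acyclic orientation of T admitting no track layout {V_i : i ∈ ℤ} with the property that every arc (v,w) with v ∈ V_i has w ∈ V_{i+1}. -/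
/-!
Orient the three edges at the centre `r` of the 2-claw away from `r`, the three outer edges
towards `u, v, w`, and everything else arbitrarily. In a layout where every arc goes to the next
track, `u, v, w` then share the track after that of `r`, and `x, y, z` share the track of `r`.
If two of `x, y, z`, say `x` and `y`, lie on the same side of `r`, the paths `x u r` and `y v r`
would cross between these two tracks whatever the order of `u` and `v`; but three vertices
cannot pairwise lie on opposite sides of `r`.
-/

namespace SimpleGraph

variable {V : Type*}

def IsOrientation (G : SimpleGraph V) (A : V → V → Prop) : Prop :=
  (∀ a b, A a b → G.Adj a b) ∧ ∀ a b, G.Adj a b → (A a b ↔ ¬ A b a)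

theorem exists_isOrientation_extending (G : SimpleGraph V) {S : V → V → Prop}
    (hS : ∀ a b, S a b → G.Adj a b) (hSasymm : ∀ a b, S a b → ¬ S b a) :
    ∃ A, G.IsOrientation A ∧ ∀ a b, S a b → A a b := by
  refine ⟨fun a b => G.Adj a b ∧ (S a b ∨ ¬ S b a ∧ WellOrderingRel a b),
    ⟨fun a b h => h.1, fun a b hab => ⟨?_, fun hba => ⟨hab, ?_⟩⟩⟩,
    fun a b h => ⟨hS a b h, Or.inl h⟩⟩
  · rintro ⟨-, hSab | ⟨hSba, hlt⟩⟩ ⟨-, hSba' | ⟨hSab', hlt'⟩⟩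
    exacts [hSasymm a b hSab hSba', hSab' hSab, hSba hSba', asymm hlt hlt']
  · by_cases hSab : S a b
    · exact Or.inl hSab
    have hSba : ¬ S b a := fun h => hba ⟨hab.symm, Or.inl h⟩
    rcases trichotomous_of WellOrderingRel a b with hlt | rfl | hgt
    · exact Or.inr ⟨hSba, hlt⟩
    · exact absurd rfl hab.ne
    · exact absurd ⟨hab.symm, Or.inr ⟨hSab, hgt⟩⟩ hba

structure IsTrackLayout_s13 (G : SimpleGraph V) (track : V → ℤ) (pos : V → ℕ) : Prop where
  track_ne : ∀ a b, G.Adj a b → track a ≠ track b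
  pos_ne : ∀ a b, a ≠ b → track a = track b → pos a ≠ pos b
  not_crossing : ∀ a b p q, G.Adj a b → G.Adj p q → track a = track p → track b = track q →
    ¬ (pos a < pos p ∧ pos q < pos b)

variable {G : SimpleGraph V} {track : V → ℤ} {pos : V → ℕ}

theorem IsTrackLayout_s13.pos_lt_iff_lt_pos (hL : G.IsTrackLayout_s13 track pos) {p q r s t : V}
    (hps : G.Adj p s) (hqt : G.Adj q t) (hrs : G.Adj r s) (hrt : G.Adj r t)
    (hp : track p = track r) (hq : track q = track r) (hst : track s = track t)
    (hpr : p ≠ r) (hqr : q ≠ r) (hne : s ≠ t) :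
    pos p < pos r ↔ pos r < pos q := by
  have hpr' := hL.pos_ne p r hpr hp
  have hqr' := hL.pos_ne q r hqr hq
  have hst' := hL.pos_ne s t hne hst
  have := hL.not_crossing q t r s hqt hrs hq hst.symm
  have := hL.not_crossing p s r t hps hrt hp hst
  have := hL.not_crossing r s q t hrs hqt hq.symm hst
  have := hL.not_crossing r t p s hrt hps hp.symm hst.symm
  omega

theorem IsTrackLayout_s13.false_of_twoClaw (hL : G.IsTrackLayout_s13 track pos) {r u v w x y z : V}
    (hxr : x ≠ r) (hyr : y ≠ r) (hzr : z ≠ r) (huv : u ≠ v) (huw : u ≠ w) (hvw : v ≠ w)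
    (h1 : G.Adj r u) (h2 : G.Adj r v) (h3 : G.Adj r w)
    (h4 : G.Adj u x) (h5 : G.Adj v y) (h6 : G.Adj w z)
    (hx : track x = track r) (hy : track y = track r) (hz : track z = track r)
    (hv : track u = track v) (hw : track u = track w) : False := by
  have hxy := hL.pos_lt_iff_lt_pos h4.symm h5.symm h1 h2 hx hy hv hxr hyr huv
  have hyz := hL.pos_lt_iff_lt_pos h5.symm h6.symm h2 h3 hy hz (hv.symm.trans hw) hyr hzr hvw
  have hxz := hL.pos_lt_iff_lt_pos h4.symm h6.symm h1 h3 hx hz hw hxr hzr huw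
  have := hL.pos_ne y r hyr hy
  have := hL.pos_ne z r hzr hz
  omega

end SimpleGraph

theorem non_caterpillar_no_span_one_layout_general {V : Type*} (G : SimpleGraph V)
    (r u v w x y z : V)
    (hnodup : ([r, u, v, w, x, y, z] : List V).Nodup)
    (h1 : G.Adj r u) (h2 : G.Adj r v) (h3 : G.Adj r w)
    (h4 : G.Adj u x) (h5 : G.Adj v y) (h6 : G.Adj w z) :
    ∃ A : V → V → Prop,
      (∀ a b, A a b → G.Adj a b) ∧
      (∀ a b, G.Adj a b → (A a b ↔ ¬ A b a)) ∧
      ¬ ∃ (f : V → ℤ) (g : V → ℕ),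
        (∀ a b, G.Adj a b → f a ≠ f b) ∧
        (∀ a b, a ≠ b → f a = f b → g a ≠ g b) ∧
        (∀ a b p q, G.Adj a b → G.Adj p q → f a = f p → f b = f q →
          ¬ (g a < g p ∧ g q < g b)) ∧
        (∀ a b, A a b → f b = f a + 1) := by
  simp only [List.nodup_cons, List.mem_cons, List.not_mem_nil, or_false, not_or,
    List.nodup_nil, and_true] at hnodup
  obtain ⟨⟨hru, hrv, hrw, hrx, hry, hrz⟩, ⟨huv, huw, hux, huy, huz⟩,
    ⟨hvw, hvx, hvy, hvz⟩, ⟨hwx, hwy, hwz⟩, -⟩ := hnodup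
  let X : Set V := {r, x, y, z}
  let Y : Set V := {u, v, w}
  have hXY : Disjoint X Y := by
    simp only [X, Y, Set.disjoint_insert_left, Set.disjoint_singleton_left, Set.mem_insert_iff,
      Set.mem_singleton_iff, not_or]
    exact ⟨⟨hru, hrv, hrw⟩, ⟨Ne.symm hux, Ne.symm hvx, Ne.symm hwx⟩,
      ⟨Ne.symm huy, Ne.symm hvy, Ne.symm hwy⟩, Ne.symm huz, Ne.symm hvz, Ne.symm hwz⟩
  obtain ⟨A, ⟨hAG, hA⟩, hXYA⟩ := G.exists_isOrientation_extending
    (S := fun a b => G.Adj a b ∧ a ∈ X ∧ b ∈ Y) (fun a b h => h.1)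
    (fun a b h h' => hXY.ne_of_mem h.2.1 h'.2.2 rfl)
  refine ⟨A, hAG, hA, ?_⟩
  rintro ⟨track, pos, htrack, hpos, hcross, hspan⟩
  have hL : G.IsTrackLayout_s13 track pos := ⟨htrack, hpos, hcross⟩
  have harc : ∀ a ∈ X, ∀ b ∈ Y, G.Adj a b → track b = track a + 1 :=
    fun a ha b hb hab => hspan a b (hXYA a b ⟨hab, ha, hb⟩)
  have arc_ru := harc r (by simp [X]) u (by simp [Y]) h1
  have arc_rv := harc r (by simp [X]) v (by simp [Y]) h2
  have arc_rw := harc r (by simp [X]) w (by simp [Y]) h3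
  have arc_xu := harc x (by simp [X]) u (by simp [Y]) h4.symm
  have arc_yv := harc y (by simp [X]) v (by simp [Y]) h5.symm
  have arc_zw := harc z (by simp [X]) w (by simp [Y]) h6.symm
  exact hL.false_of_twoClaw (Ne.symm hrx) (Ne.symm hry) (Ne.symm hrz) huv huw hvw
    h1 h2 h3 h4 h5 h6 (by omega) (by omega) (by omega) (by omega) (by omega)

/-- If a tree `G` contains a 2-claw (so is not a caterpillar), then some
acyclic orientation of `G` admits no track layout indexed by `ℤ` in which every
arc goes from some track `V_i` to the next track `V_{i+1}`. -/
theorem non_caterpillar_no_span_one_layout {V : Type*} (G : SimpleGraph V)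
    (hT : G.IsTree) (r u v w x y z : V)
    (hnodup : ([r, u, v, w, x, y, z] : List V).Nodup)
    (h1 : G.Adj r u) (h2 : G.Adj r v) (h3 : G.Adj r w)
    (h4 : G.Adj u x) (h5 : G.Adj v y) (h6 : G.Adj w z) :
    ∃ A : V → V → Prop,
      (∀ a b, A a b → G.Adj a b) ∧
      (∀ a b, G.Adj a b → (A a b ↔ ¬ A b a)) ∧
      ¬ ∃ (f : V → ℤ) (g : V → ℕ),
        (∀ a b, G.Adj a b → f a ≠ f b) ∧
        (∀ a b, a ≠ b → f a = f b → g a ≠ g b) ∧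
        (∀ a b p q, G.Adj a b → G.Adj p q → f a = f p → f b = f q →
          ¬ (g a < g p ∧ g q < g b)) ∧
        (∀ a b, A a b → f b = f a + 1) :=
  non_caterpillar_no_span_one_layout_general G r u v w x y z hnodup h1 h2 h3 h4 h5 h6
end

section
/- Let G_n be the dag with vertices u_1,...,u_{2n}, arcs (u_i, u_{i+1}) for 1 ≤ i ≤ 2n−1, and arcs (u_i, u_{2n−i+1}) for 1 ≤ i ≤ n. Then (u_1, u_2, ..., u_{2n}) is the unique topological ordering of G_n, the n arcs (u_i, u_{2n−i+1}) are pairwise nested in this ordering, and consequently the upward queue-number of G_n is at least n. -/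
/-!
The path arcs `(i, i+1)` force every topological ordering to be strictly monotone, hence the
identity. In it the outer arcs `(i, 2n-1-i)`, `i < n`, are pairwise nested, so no two of them
can share a queue and any upward queue layout uses at least `n` queues.
-/

/-- The arcs of the dag `G_n` on vertices `0,…,2n-1` (0-indexed version of
`u_1,…,u_{2n}`): arcs `(i, i+1)` and arcs `(i, 2n-1-i)` for `i < n`. -/
def GnArc (n : ℕ) (a b : Fin (2 * n)) : Prop :=
  ((b : ℕ) = (a : ℕ) + 1) ∨ ((a : ℕ) < n ∧ (b : ℕ) = 2 * n - 1 - (a : ℕ))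

lemma Fin.strictMono_of_forall_val_eq_succ {α : Type*} [Preorder α] {m : ℕ} {f : Fin m → α}
    (h : ∀ a b : Fin m, (b : ℕ) = (a : ℕ) + 1 → f a < f b) : StrictMono f := by
  cases m with
  | zero => exact fun a => a.elim0
  | succ m => exact Fin.strictMono_iff_lt_succ.2 fun i => h _ _ (by simp)

lemma Equiv.eq_refl_of_strictMono {α : Type*} [LinearOrder α] [WellFoundedLT α] {σ : α ≃ α}
    (hσ : StrictMono σ) : σ = Equiv.refl α := by
  have : hσ.orderIsoOfSurjective σ σ.surjective = OrderIso.refl α := Subsingleton.elim _ _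
  exact Equiv.ext fun a => DFunLike.congr_fun this a

namespace GnArc

variable {n : ℕ}

lemma strictMono_of_forall_lt {α : Type*} [Preorder α] {σ : Fin (2 * n) → α}
    (hσ : ∀ a b, GnArc n a b → σ a < σ b) : StrictMono σ :=
  Fin.strictMono_of_forall_val_eq_succ fun a b hab => hσ a b (Or.inl hab)

def inner (i : Fin n) : Fin (2 * n) := ⟨i, by omega⟩

def outer (i : Fin n) : Fin (2 * n) := ⟨2 * n - 1 - i, by omega⟩

lemma inner_outer (i : Fin n) : GnArc n (inner i) (outer i) := Or.inr ⟨i.isLt, rfl⟩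

lemma inner_lt_inner {i j : Fin n} (hij : i < j) : inner i < inner j := hij

lemma outer_lt_outer {i j : Fin n} (hij : i < j) : outer j < outer i := by
  change 2 * n - 1 - (j : ℕ) < 2 * n - 1 - i
  omega

end GnArc

open GnArc in
theorem Gn_upward_queue_number_lower_bound_general (n : ℕ) :
    (∀ σ : Fin (2 * n) ≃ Fin (2 * n),
      (∀ a b, GnArc n a b → σ a < σ b) → σ = Equiv.refl _) ∧
    (∀ i j : Fin (2 * n), (i : ℕ) < (j : ℕ) → (j : ℕ) < n →
      (i : ℕ) < (j : ℕ) ∧ (j : ℕ) < 2 * n - 1 - (j : ℕ) ∧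
        2 * n - 1 - (j : ℕ) < 2 * n - 1 - (i : ℕ)) ∧
    (∀ (k : ℕ) (σ : Fin (2 * n) → ℕ) (q : ∀ a b, GnArc n a b → Fin k),
      Function.Injective σ →
      (∀ a b, GnArc n a b → σ a < σ b) →
      (∀ a b x y (h1 : GnArc n a b) (h2 : GnArc n x y),
        q a b h1 = q x y h2 → ¬ (σ a < σ x ∧ σ y < σ b)) →
      n ≤ k) := by
  refine ⟨fun σ hσ => Equiv.eq_refl_of_strictMono (strictMono_of_forall_lt hσ),
    fun i j hij hjn => ⟨hij, by omega, by omega⟩, ?_⟩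
  intro k σ q _ hσ hq
  have hmono := strictMono_of_forall_lt hσ
  have hinj : Function.Injective fun i : Fin n => q _ _ (inner_outer i) :=
    .of_lt_imp_ne fun i j hij hqij =>
      hq _ _ _ _ _ _ hqij ⟨hmono (inner_lt_inner hij), hmono (outer_lt_outer hij)⟩
  simpa using Fintype.card_le_of_injective _ hinj

/-- The identity is the unique topological ordering of `G_n`, the `n` arcs
`(i, 2n-1-i)` are pairwise nested in it, and consequently the upward
queue-number of `G_n` is at least `n`. -/
theorem Gn_upward_queue_number_lower_bound (n : ℕ) (hn : 1 ≤ n) :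
    (∀ σ : Fin (2 * n) ≃ Fin (2 * n),
      (∀ a b, GnArc n a b → σ a < σ b) → σ = Equiv.refl _) ∧
    (∀ i j : Fin (2 * n), (i : ℕ) < (j : ℕ) → (j : ℕ) < n →
      (i : ℕ) < (j : ℕ) ∧ (j : ℕ) < 2 * n - 1 - (j : ℕ) ∧
        2 * n - 1 - (j : ℕ) < 2 * n - 1 - (i : ℕ)) ∧
    (∀ (k : ℕ) (σ : Fin (2 * n) → ℕ) (q : ∀ a b, GnArc n a b → Fin k),
      Function.Injective σ →
      (∀ a b, GnArc n a b → σ a < σ b) →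
      (∀ a b x y (h1 : GnArc n a b) (h2 : GnArc n x y),
        q a b h1 = q x y h2 → ¬ (σ a < σ x ∧ σ y < σ b)) →
      n ≤ k) :=
  Gn_upward_queue_number_lower_bound_general n
end

section
/- Every dag G with a topological vertex ordering of bandwidth b has a subdivision, with at most ⌈(b−1)/2⌉ division vertices per arc, that admits an upward 2-queue layout. -/
/-!
Lay the subdivision out along `σ₀`. An arc from position `p` to position `q` becomes a path
whose first step has length 1 or 2, according to the parity of `q - p`, and whose later steps all
have length 2, so its `⌊(q - p - 1) / 2⌋` division vertices sit at `q - 2, q - 4, …` above `p`.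
Vertices at equal positions are ordered by the signed number of steps still to go to the head of
their arc (positive for odd `q - p`, negative for even, zero for original vertices), then by `p`.

First steps form one queue and later steps the other. Two later steps can only nest if their tails
share a position; but a step moves the signed count one unit towards 0 and keeps `p`, so it
carries the order of the tails over to the heads. Two first steps can only nest if both end at the
same position with signed count 0, i.e. at the same original vertex.
-/

theorem List.mem_zip_cons_map_range {α : Type*} (f : ℕ → α) (n : ℕ) {x y : α} :
    (x, y) ∈ (f 0 :: (List.range n).map (fun i => f (i + 1))).zip
        ((List.range n).map fun i => f (i + 1)) ↔
      ∃ i < n, x = f i ∧ y = f (i + 1) := by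
  have : f 0 :: (List.range n).map (fun i => f (i + 1)) = (List.range (n + 1)).map f := by
    simp [List.range_succ_eq_map, Function.comp_def]
  rw [this, List.mem_iff_getElem]
  simp only [List.getElem_zip, List.length_zip, List.length_map, List.length_range,
    List.getElem_map, List.getElem_range, Prod.mk.injEq]
  constructor <;> rintro ⟨i, hi, rfl, rfl⟩ <;> exact ⟨i, by omega, rfl, rfl⟩

theorem exists_nat_ranking {α β : Type*} [Fintype α] [LinearOrder β] {f : α → β}
    (hf : Function.Injective f) :
    ∃ τ : α → ℕ, Function.Injective τ ∧ ∀ x y, τ x < τ y ↔ f x < f y := by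
  let _ : LinearOrder α := LinearOrder.lift' f hf
  let rank := (Fintype.orderIsoFinOfCardEq α rfl).symm
  exact ⟨fun x => rank x, Fin.val_injective.comp rank.injective, fun _ _ => rank.lt_iff_lt⟩

namespace BandwidthSubdivision

/-- The sort key of a vertex of the subdivision: its position, the signed number of steps left to
the head of its arc, and the position of the tail of its arc (`0` for original vertices). -/
@[ext] structure Key where
  pos : ℕ
  rem : ℤ
  origin : ℕ

namespace Key

def toLex (k : Key) : ℕ ×ₗ ℤ ×ₗ ℕ := _root_.toLex (k.pos, _root_.toLex (k.rem, k.origin))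

instance : LinearOrder Key :=
  LinearOrder.lift' toLex fun a c h => by simpa [toLex, Key.ext_iff] using h

theorem lt_iff {a c : Key} : a < c ↔ a.pos < c.pos ∨
    a.pos = c.pos ∧ (a.rem < c.rem ∨ a.rem = c.rem ∧ a.origin < c.origin) := by
  change toLex a < toLex c ↔ _
  simp [toLex, Prod.Lex.toLex_lt_toLex]

def IsFirstSegment (a c : Key) : Prop :=
  a.rem = 0 ∧ a.origin = 0 ∧
    ((c.pos = a.pos + 1 ∧ 0 ≤ c.rem) ∨ (c.pos = a.pos + 2 ∧ c.rem ≤ 0)) ∧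
    (c.rem = 0 → c.origin = 0)

def IsLaterSegment (a c : Key) : Prop :=
  c.pos = a.pos + 2 ∧ ((0 < a.rem ∧ c.rem = a.rem - 1) ∨ (a.rem < 0 ∧ c.rem = a.rem + 1)) ∧
    (c.rem ≠ 0 → c.origin = a.origin) ∧ (c.rem = 0 → c.origin = 0)

def IsSegment (a c : Key) : Prop := IsFirstSegment a c ∨ IsLaterSegment a c

theorem IsSegment.lt {a c : Key} (h : IsSegment a c) : a < c := by
  rw [lt_iff]
  rcases h with ⟨-, -, h, -⟩ | ⟨h, -⟩ <;> omega

theorem IsFirstSegment.not_nested {a c a' c' : Key} (h : IsFirstSegment a c)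
    (h' : IsFirstSegment a' c') : ¬ (a < a' ∧ c' < c) := by
  unfold IsFirstSegment at h h'
  rw [lt_iff, lt_iff]
  omega

theorem IsLaterSegment.not_nested {a c a' c' : Key} (h : IsLaterSegment a c)
    (h' : IsLaterSegment a' c') : ¬ (a < a' ∧ c' < c) := by
  unfold IsLaterSegment at h h'
  rw [lt_iff, lt_iff]
  omega

theorem IsLaterSegment.rem_ne_zero {a c : Key} (h : IsLaterSegment a c) : a.rem ≠ 0 := by
  rcases h.2.1 with ⟨h, -⟩ | ⟨h, -⟩ <;> omega

theorem IsSegment.not_nested {a c a' c' : Key} (h : IsSegment a c) (h' : IsSegment a' c')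
    (hq : a.rem = 0 ↔ a'.rem = 0) : ¬ (a < a' ∧ c' < c) := by
  rcases h with h | h <;> rcases h' with h' | h'
  · exact h.not_nested h'
  · exact absurd (hq.mp h.1) h'.rem_ne_zero
  · exact absurd (hq.mpr h'.1) h.rem_ne_zero
  · exact h.not_nested h'

end Key

def numDivisions (p q : ℕ) : ℕ := (q - p - 1) / 2

/-- Vertex `i + 1` of the subdivided arc from position `p` to position `q` lies
`r = numDivisions p q - i` steps of length 2 before `q`. -/
def pathKey (p q : ℕ) : ℕ → Key
  | 0 => ⟨p, 0, 0⟩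
  | i + 1 =>
    let r := numDivisions p q - i
    ⟨q - 2 * r, if (q - p) % 2 = 1 then r else -r, if r = 0 then 0 else p⟩

theorem pathKey_isSegment {p q i : ℕ} (hpq : p < q) (hi : i ≤ numDivisions p q) :
    (pathKey p q i).IsSegment (pathKey p q (i + 1)) := by
  unfold numDivisions at hi
  cases i with
  | zero =>
    left
    simp only [Key.IsFirstSegment, pathKey, numDivisions]
    grind
  | succ i =>
    right
    simp only [Key.IsLaterSegment, pathKey, numDivisions]
    grind

theorem pathKey_succ_rem_ne_zero {p q j : ℕ} (hj : j < numDivisions p q) :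
    (pathKey p q (j + 1)).rem ≠ 0 := by
  unfold numDivisions at hj
  simp only [pathKey, numDivisions]
  grind

theorem pathKey_succ_injective {p q j p' q' j' : ℕ} (hj : j < numDivisions p q)
    (hj' : j' < numDivisions p' q') (h : pathKey p q (j + 1) = pathKey p' q' (j' + 1)) :
    p = p' ∧ q = q' ∧ j = j' := by
  unfold numDivisions at hj hj'
  simp only [pathKey, numDivisions, Key.ext_iff] at h
  grind

section Construction

variable {V : Type*} (A : V → V → Prop) (σ : V → ℕ)

structure DivisionVertex where
  tail : V
  head : V
  isArc : A tail head
  index : Fin (numDivisions (σ tail) (σ head))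

instance [Finite V] : Finite (DivisionVertex A σ) :=
  Finite.of_injective
    (fun d => (⟨d.tail, d.head, d.index⟩ : Σ v w : V, Fin (numDivisions (σ v) (σ w))))
    fun ⟨_, _, _, _⟩ ⟨_, _, _, _⟩ h => by
      obtain ⟨rfl, h⟩ := Sigma.mk.inj h
      obtain ⟨rfl, h⟩ := Sigma.mk.inj (eq_of_heq h)
      cases h
      rfl

variable {A σ} {W : Type*} (f : DivisionVertex A σ ≃ W)

def divisionList {v w : V} (h : A v w) : List W :=
  List.ofFn fun j => f ⟨v, w, h, j⟩

def pathVertex {v w : V} (h : A v w) : ℕ → V ⊕ W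
  | 0 => .inl v
  | i + 1 =>
    if hi : i < numDivisions (σ v) (σ w) then .inr (f ⟨v, w, h, ⟨i, hi⟩⟩) else .inl w

def key : V ⊕ W → Key
  | .inl u => ⟨σ u, 0, 0⟩
  | .inr d => pathKey (σ (f.symm d).tail) (σ (f.symm d).head) ((f.symm d).index + 1)

theorem key_inr_apply (x : DivisionVertex A σ) :
    key f (.inr (f x)) = pathKey (σ x.tail) (σ x.head) (x.index + 1) := by
  rw [key, f.symm_apply_apply]

theorem mem_divisionList {v w : V} (h : A v w) {d : W} :
    d ∈ divisionList f h ↔ (f.symm d).tail = v ∧ (f.symm d).head = w := by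
  obtain ⟨⟨v', w', h', j⟩, rfl⟩ := f.surjective d
  simp only [divisionList, List.mem_ofFn', Set.mem_range, f.apply_eq_iff_eq, f.symm_apply_apply]
  constructor
  · rintro ⟨j, ⟨⟩⟩
    exact ⟨rfl, rfl⟩
  · rintro ⟨rfl, rfl⟩
    exact ⟨j, rfl⟩

theorem length_divisionList {v w : V} (h : A v w) :
    (divisionList f h).length = numDivisions (σ v) (σ w) := List.length_ofFn

theorem nodup_divisionList {v w : V} (h : A v w) : (divisionList f h).Nodup :=
  List.nodup_ofFn.mpr fun _ _ hj => by cases f.injective hj; rfl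

theorem divisionList_path {v w : V} (h : A v w) :
    (divisionList f h).map .inr ++ [.inl w] =
      (List.range (numDivisions (σ v) (σ w) + 1)).map fun i => pathVertex f h (i + 1) := by
  rw [List.range_succ, List.map_append, List.map_singleton]
  congr 1
  · refine List.ext_getElem (by simp [divisionList]) fun i hi _ => ?_
    simp only [divisionList, List.length_map, List.length_ofFn] at hi
    simp [divisionList, pathVertex, hi]
  · simp [pathVertex]

theorem key_pathVertex {v w : V} (h : A v w) {i : ℕ} (hi : i ≤ numDivisions (σ v) (σ w) + 1) :
    key f (pathVertex f h i) = pathKey (σ v) (σ w) i := by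
  cases i with
  | zero => rfl
  | succ i =>
    by_cases hi' : i < numDivisions (σ v) (σ w)
    · simp only [pathVertex, hi', dite_true, key_inr_apply]
    · obtain rfl : i = numDivisions (σ v) (σ w) := by omega
      simp [pathVertex, key, pathKey]

theorem isSegment_key_of_mem_path (htopo : ∀ v w, A v w → σ v < σ w) {v w : V} (h : A v w)
    {x y : V ⊕ W} (hxy : (x, y) ∈ (.inl v :: ((divisionList f h).map .inr ++ [.inl w])).zip
      ((divisionList f h).map .inr ++ [.inl w])) :
    (key f x).IsSegment (key f y) := by
  rw [divisionList_path] at hxy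
  obtain ⟨i, hi, rfl, rfl⟩ := (List.mem_zip_cons_map_range (pathVertex f h) _).mp hxy
  rw [key_pathVertex f h (by omega), key_pathVertex f h (by omega)]
  exact pathKey_isSegment (htopo v w h) (by omega)

theorem key_injective (hσ : Function.Injective σ) : Function.Injective (key f) := by
  rintro (u | d) (u' | d') h
  · exact congrArg Sum.inl (hσ (congrArg Key.pos h))
  · obtain ⟨⟨_, _, _, j⟩, rfl⟩ := f.surjective d'
    rw [key_inr_apply] at h
    exact absurd (congrArg Key.rem h) (pathKey_succ_rem_ne_zero j.2).symm
  · obtain ⟨⟨_, _, _, j⟩, rfl⟩ := f.surjective d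
    rw [key_inr_apply] at h
    exact absurd (congrArg Key.rem h) (pathKey_succ_rem_ne_zero j.2)
  · obtain ⟨⟨v, w, _, j⟩, rfl⟩ := f.surjective d
    obtain ⟨⟨v', w', _, j'⟩, rfl⟩ := f.surjective d'
    rw [key_inr_apply, key_inr_apply] at h
    obtain ⟨hv, hw, hj⟩ := pathKey_succ_injective j.2 j'.2 h
    obtain rfl := hσ hv
    obtain rfl := hσ hw
    obtain rfl := Fin.ext hj
    rfl

end Construction

end BandwidthSubdivision

open BandwidthSubdivision

/-- Every dag with a topological ordering of bandwidth at most `b` has a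
subdivision, with at most `⌈(b-1)/2⌉` division vertices per arc, that admits an
upward 2-queue layout. -/
theorem bandwidth_subdivision_two_queue {V : Type*} [Fintype V]
    (A : V → V → Prop) (b : ℕ)
    (σ₀ : V → ℕ) (hσinj : Function.Injective σ₀)
    (htopo : ∀ v w, A v w → σ₀ v < σ₀ w)
    (hband : ∀ v w, A v w → σ₀ w ≤ σ₀ v + b) :
    ∃ (W : Type) (_ : Fintype W) (P : ∀ v w, A v w → List W)
      (B : (V ⊕ W) → (V ⊕ W) → Prop),
      -- at most ⌈(b-1)/2⌉ division vertices per arc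
      (∀ v w (h : A v w), (P v w h).length ≤ (b - 1 + 1) / 2) ∧
      -- division vertices along one arc are distinct
      (∀ v w (h : A v w), (P v w h).Nodup) ∧
      -- distinct arcs get disjoint sets of division vertices
      (∀ v w x y (h1 : A v w) (h2 : A x y), (v, w) ≠ (x, y) →
        ∀ d, d ∈ P v w h1 → d ∉ P x y h2) ∧
      -- every division vertex is used
      (∀ d : W, ∃ (v w : V) (h : A v w), d ∈ P v w h) ∧
      -- B is the subdivision: each arc (v,w) is replaced by the directed path
      -- inl v :: map inr (P v w h) ++ [inl w]
      (∀ x y, B x y ↔ ∃ (v w : V) (h : A v w),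
        (x, y) ∈ (Sum.inl v :: ((P v w h).map Sum.inr ++ [Sum.inl w])).zip
          ((P v w h).map Sum.inr ++ [Sum.inl w])) ∧
      -- the subdivision has an upward 2-queue layout
      (∃ (τ : V ⊕ W → ℕ) (q : ∀ x y, B x y → Fin 2),
        Function.Injective τ ∧ (∀ x y, B x y → τ x < τ y) ∧
        ∀ x y x' y' (h1 : B x y) (h2 : B x' y'), q x y h1 = q x' y' h2 →
          ¬ (τ x < τ x' ∧ τ y' < τ y)) := by
  let f := Finite.equivFin (DivisionVertex A σ₀)
  obtain ⟨τ, hτ, hτkey⟩ := exists_nat_ranking (key_injective f hσinj)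
  refine ⟨_, inferInstance, fun _ _ h => divisionList f h, _, ?_,
    fun _ _ h => nodup_divisionList f h, ?_, ?_, fun _ _ => Iff.rfl,
    τ, fun x _ _ => if (key f x).rem = 0 then 0 else 1, hτ, ?_, ?_⟩
  · intro v w h
    have := htopo v w h
    have := hband v w h
    rw [length_divisionList, numDivisions]
    omega
  · intro v w x y h₁ h₂ hne d hd₁ hd₂
    rw [mem_divisionList] at hd₁ hd₂
    exact hne (by rw [← hd₁.1, ← hd₁.2, hd₂.1, hd₂.2])
  · intro d
    exact ⟨_, _, (f.symm d).isArc, (mem_divisionList f _).mpr ⟨rfl, rfl⟩⟩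
  · rintro x y ⟨v, w, h, hxy⟩
    exact (hτkey x y).mpr (isSegment_key_of_mem_path f htopo h hxy).lt
  · rintro x y x' y' ⟨v, w, h, hxy⟩ ⟨v', w', h', hxy'⟩ hq
    rw [hτkey, hτkey]
    refine (isSegment_key_of_mem_path f htopo h hxy).not_nested
      (isSegment_key_of_mem_path f htopo h' hxy') ?_
    dsimp only at hq
    split_ifs at hq <;> simp_all
end

section
/- Let {V_i : 0 ≤ i ≤ c−1} be a c-colouring of a graph G and let p ≥ 2c−1 be prime. If each vertex of V_i is placed at a distinct point (i, t, i·t) with t ≡ i² (mod p), then no two straight edge segments of G cross and no edge passes through a non-endpoint vertex. -/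
/-!
A vertex of colour `i` and height `t` sits at `(i, t, i t)`, on the saddle surface `z = x y`.
Along the segment between two such points the defect `z - x y` equals `θ (1 - θ) Δx Δy`.
For an edge both differences are nonzero: the colours differ, and so do the heights, because
`t ≡ i² (mod p)` and distinct colours `i, j < c` have distinct squares modulo `p > i + j`.
Hence the only points of the surface on an edge are its endpoints, which rules out vertices
inside edges and crossings at an endpoint of only one edge.

If two edges cross at interior points, their four endpoints are coplanar, so the determinant
with rows `(1, i, t, i t)` vanishes. Modulo `p` these rows are `(1, i, i², i³)`, a Vandermonde
matrix, so two endpoints of different edges share a colour; a direct computation then shows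
that the two edges coincide.
-/

def toR3 (p : ℤ × ℤ × ℤ) : ℝ × ℝ × ℝ := ((p.1 : ℝ), (p.2.1 : ℝ), (p.2.2 : ℝ))

open Matrix

def saddlePoint (x y : ℝ) : ℝ × ℝ × ℝ := (x, y, x * y)

def saddleDefect (z : ℝ × ℝ × ℝ) : ℝ := z.2.2 - z.1 * z.2.1

@[simp]
lemma saddleDefect_saddlePoint (x y : ℝ) : saddleDefect (saddlePoint x y) = 0 := by
  simp [saddleDefect, saddlePoint]

lemma saddleDefect_smul_add_smul {α β : ℝ} (hαβ : α + β = 1) (x y x' y' : ℝ) :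
    saddleDefect (α • saddlePoint x y + β • saddlePoint x' y') =
      α * β * ((x' - x) * (y' - y)) := by
  obtain rfl : α = 1 - β := by linarith
  simp only [saddleDefect, saddlePoint, Prod.smul_mk, Prod.mk_add_mk, smul_eq_mul]
  ring

lemma saddleDefect_eq_zero_iff_of_mem_segment {x y x' y' : ℝ} {z : ℝ × ℝ × ℝ}
    (hx : x ≠ x') (hy : y ≠ y') (hz : z ∈ segment ℝ (saddlePoint x y) (saddlePoint x' y')) :
    saddleDefect z = 0 ↔ z = saddlePoint x y ∨ z = saddlePoint x' y' := by
  refine ⟨fun h => ?_, by rintro (rfl | rfl) <;> exact saddleDefect_saddlePoint _ _⟩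
  obtain ⟨α, β, -, -, hαβ, rfl⟩ := hz
  rw [saddleDefect_smul_add_smul hαβ] at h
  rcases mul_eq_zero.mp h with h | h
  · rcases mul_eq_zero.mp h with rfl | rfl
    · right; simp [show β = 1 by linarith]
    · left; simp [show α = 1 by linarith]
  · exact absurd h (mul_ne_zero (sub_ne_zero.mpr hx.symm) (sub_ne_zero.mpr hy.symm))

lemma mem_openSegment_of_saddleDefect_ne_zero {x y x' y' : ℝ} {z : ℝ × ℝ × ℝ}
    (hz : z ∈ segment ℝ (saddlePoint x y) (saddlePoint x' y')) (h : saddleDefect z ≠ 0) :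
    z ∈ openSegment ℝ (saddlePoint x y) (saddlePoint x' y') :=
  mem_openSegment_of_ne_left_right (by rintro rfl; simp at h) (by rintro rfl; simp at h) hz

lemma right_snd_eq_of_mem_openSegment_saddlePoint {a b b' a₁ b₁ a₂ b₂ : ℝ} {z : ℝ × ℝ × ℝ}
    (ha : a ≠ a₁) (h₁ : z ∈ openSegment ℝ (saddlePoint a b) (saddlePoint a₁ b₁))
    (h₂ : z ∈ openSegment ℝ (saddlePoint a b') (saddlePoint a₂ b₂)) : b₁ = b₂ := by
  obtain ⟨α, β, -, hβ, hαβ, rfl⟩ := h₁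
  obtain ⟨γ, δ, -, -, hγδ, h⟩ := h₂
  obtain rfl : α = 1 - β := by linarith
  obtain rfl : γ = 1 - δ := by linarith
  simp only [saddlePoint, Prod.smul_mk, Prod.mk_add_mk, smul_eq_mul, Prod.mk.injEq] at h
  obtain ⟨e₁, e₂, e₃⟩ := h
  -- `e₃ - a e₂` eliminates the common left abscissa `a`
  have key : β * (a₁ - a) * (b₁ - b₂) = 0 := by linear_combination a * e₂ - e₃ + b₂ * e₁
  exact sub_eq_zero.mp ((mul_eq_zero.mp key).resolve_left
    (mul_ne_zero hβ.ne' (sub_ne_zero.mpr ha.symm)))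

lemma left_snd_eq_of_mem_openSegment_saddlePoint {a b b' a₁ b₁ : ℝ} {z : ℝ × ℝ × ℝ}
    (ha : a ≠ a₁) (h₁ : z ∈ openSegment ℝ (saddlePoint a b) (saddlePoint a₁ b₁))
    (h₂ : z ∈ openSegment ℝ (saddlePoint a b') (saddlePoint a₁ b₁)) : b = b' := by
  obtain ⟨α, β, hα, -, hαβ, rfl⟩ := h₁
  obtain ⟨γ, δ, -, -, hγδ, h⟩ := h₂
  obtain rfl : α = 1 - β := by linarith
  obtain rfl : γ = 1 - δ := by linarith
  simp only [saddlePoint, Prod.smul_mk, Prod.mk_add_mk, smul_eq_mul, Prod.mk.injEq] at h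
  obtain ⟨e₁, e₂, -⟩ := h
  have hδ : (δ - β) * (a₁ - a) = 0 := by linear_combination e₁
  obtain rfl : δ = β :=
    sub_eq_zero.mp ((mul_eq_zero.mp hδ).resolve_right (sub_ne_zero.mpr ha.symm))
  have hb : (1 - δ) * (b' - b) = 0 := by linear_combination e₂
  exact (sub_eq_zero.mp ((mul_eq_zero.mp hb).resolve_left hα.ne')).symm

lemma eq_of_natCast_sq_eq {p : ℕ} [Fact p.Prime] {i j : ℕ} (hij : i + j < p)
    (h : (i : ZMod p) ^ 2 = (j : ZMod p) ^ 2) : i = j := by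
  rcases sq_eq_sq_iff_eq_or_eq_neg.mp h with h | h
  · rwa [ZMod.natCast_eq_natCast_iff', Nat.mod_eq_of_lt (by omega),
      Nat.mod_eq_of_lt (by omega)] at h
  · rw [eq_neg_iff_add_eq_zero, ← Nat.cast_add, ZMod.natCast_eq_zero_iff] at h
    have := Nat.eq_zero_of_dvd_of_lt h hij
    omega

lemma Fin.natCast_zmod_injective {c p : ℕ} (hcp : c ≤ p) :
    Function.Injective fun i : Fin c => ((i : ℕ) : ZMod p) := by
  intro i j h
  simp only [ZMod.natCast_eq_natCast_iff', Nat.mod_eq_of_lt (i.isLt.trans_le hcp),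
    Nat.mod_eq_of_lt (j.isLt.trans_le hcp)] at h
  exact Fin.ext h

def saddleMatrix (i : Fin 4 → ℕ) (t : Fin 4 → ℤ) : Matrix (Fin 4) (Fin 4) ℤ :=
  .of fun a => ![1, (i a : ℤ), t a, i a * t a]

lemma det_saddleMatrix_ne_zero {p : ℕ} [Fact p.Prime] {i : Fin 4 → ℕ} {t : Fin 4 → ℤ}
    (ht : ∀ a, (t a : ZMod p) = (i a : ZMod p) ^ 2)
    (hi : Function.Injective fun a => (i a : ZMod p)) :
    (saddleMatrix i t).det ≠ 0 := by
  have hV : (saddleMatrix i t).map (Int.cast : ℤ → ZMod p) =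
      vandermonde fun a => (i a : ZMod p) := by
    ext a k; fin_cases k <;> simp [saddleMatrix, ht, pow_succ, mul_comm]
  intro h
  apply det_vandermonde_ne_zero_iff.mpr hi
  rw [← hV, ← Int.cast_det, h, Int.cast_zero]

lemma det_saddleMatrix_eq_zero_of_mem_openSegment {i : Fin 4 → ℕ} {t : Fin 4 → ℤ}
    {z : ℝ × ℝ × ℝ}
    (h₁ : z ∈ openSegment ℝ (saddlePoint (i 0) (t 0)) (saddlePoint (i 1) (t 1)))
    (h₂ : z ∈ openSegment ℝ (saddlePoint (i 2) (t 2)) (saddlePoint (i 3) (t 3))) :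
    (saddleMatrix i t).det = 0 := by
  obtain ⟨α, β, hα, -, hαβ, rfl⟩ := h₁
  obtain ⟨γ, δ, -, -, hγδ, h⟩ := h₂
  simp only [saddlePoint, Prod.smul_mk, Prod.mk_add_mk, smul_eq_mul, Prod.mk.injEq] at h
  have hR : ((saddleMatrix i t).map (Int.cast : ℤ → ℝ)).det = 0 := by
    refine exists_vecMul_eq_zero_iff.mp
      ⟨![α, β, -γ, -δ], fun h0 => hα.ne' (congrFun h0 0), ?_⟩
    ext k; fin_cases k <;> simp [vecMul, dotProduct, Fin.sum_univ_four, saddleMatrix] <;> linarith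
  exact_mod_cast (Int.cast_det (R := ℝ) _).trans hR

lemma toR3_injective : Function.Injective toR3 := by
  rintro ⟨a, b, c⟩ ⟨a', b', c'⟩ h
  simp only [toR3, Prod.mk.injEq, Int.cast_inj] at h
  simp [h]

section Placement

variable {V : Type*} {c p : ℕ} {f : V → Fin c} {t : V → ℤ}

local notation "P" v => saddlePoint ((f v : ℕ) : ℝ) (t v)

lemma colour_eq_of_t_eq [Fact p.Prime] (hpc : 2 * c - 1 ≤ p)
    (ht : ∀ v, (t v : ZMod p) = ((f v : ℕ) : ZMod p) ^ 2) {v w : V} (h : t v = t w) :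
    f v = f w := by
  have := (f v).isLt; have := (f w).isLt
  exact Fin.ext (eq_of_natCast_sq_eq (p := p) (by omega) (by rw [← ht, ← ht, h]))

lemma eq_of_mem_openSegment_of_colour_eq [Fact p.Prime] (hpc : 2 * c - 1 ≤ p)
    (ht : ∀ v, (t v : ZMod p) = ((f v : ℕ) : ZMod p) ^ 2) {v w x y : V} {z : ℝ × ℝ × ℝ}
    (hvx : f v = f x) (hvw : f v ≠ f w)
    (h₁ : z ∈ openSegment ℝ (P v) (P w)) (h₂ : z ∈ openSegment ℝ (P x) (P y)) :
    (P v) = (P x) ∧ (P w) = (P y) := by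
  have hvw' : ((f v : ℕ) : ℝ) ≠ (f w : ℕ) := by exact_mod_cast Fin.val_ne_of_ne hvw
  rw [hvx] at h₁ hvw'
  have hwy : t w = t y := by
    exact_mod_cast right_snd_eq_of_mem_openSegment_saddlePoint hvw' h₁ h₂
  have hfwy : f w = f y := colour_eq_of_t_eq hpc ht hwy
  rw [hfwy] at h₁ hvw'
  rw [hwy] at h₁
  have hvx' : t v = t x := by
    exact_mod_cast left_snd_eq_of_mem_openSegment_saddlePoint hvw' h₁ h₂
  rw [hvx, hvx', hfwy, hwy]
  exact ⟨rfl, rfl⟩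

lemma eq_or_eq_of_mem_openSegment_inter [Fact p.Prime] (hpc : 2 * c - 1 ≤ p)
    (ht : ∀ v, (t v : ZMod p) = ((f v : ℕ) : ZMod p) ^ 2) {v w x y : V} {z : ℝ × ℝ × ℝ}
    (hvw : f v ≠ f w) (hxy : f x ≠ f y)
    (h₁ : z ∈ openSegment ℝ (P v) (P w)) (h₂ : z ∈ openSegment ℝ (P x) (P y)) :
    ((P v) = (P x) ∧ (P w) = (P y)) ∨ ((P v) = (P y) ∧ (P w) = (P x)) := by
  have h₁' := openSegment_symm ℝ (P v) (P w) ▸ h₁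
  have h₂' := openSegment_symm ℝ (P x) (P y) ▸ h₂
  by_cases hvx : f v = f x
  · exact .inl (eq_of_mem_openSegment_of_colour_eq hpc ht hvx hvw h₁ h₂)
  by_cases hvy : f v = f y
  · exact .inr (eq_of_mem_openSegment_of_colour_eq hpc ht hvy hvw h₁ h₂')
  by_cases hwx : f w = f x
  · exact .inr (eq_of_mem_openSegment_of_colour_eq hpc ht hwx hvw.symm h₁' h₂).symm
  by_cases hwy : f w = f y
  · exact .inl (eq_of_mem_openSegment_of_colour_eq hpc ht hwy hvw.symm h₁' h₂').symm
  have hcp : c ≤ p := by have := (f v).isLt; omega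
  refine absurd (det_saddleMatrix_eq_zero_of_mem_openSegment
    (i := fun a => (![f v, f w, f x, f y] a : ℕ)) (t := ![t v, t w, t x, t y]) h₁ h₂)
    (det_saddleMatrix_ne_zero (p := p) (fun a => ?_) ?_)
  · fin_cases a <;> exact ht _
  · refine (Fin.natCast_zmod_injective hcp).comp ?_
    simp only [Matrix.vecCons, Fin.cons_injective_iff]
    simp [*, Function.Injective]

end Placement

/-- Pach–Thiele–Tóth construction: given a proper `c`-colouring of `G` and a
prime `p ≥ 2c-1`, placing each vertex of colour `i` at a distinct point
`(i, t, i·t)` with `t ≡ i² (mod p)` gives a crossing-free drawing: no two edge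
segments cross, and no edge passes through a non-endpoint vertex. -/
theorem coloured_placement_crossing_free {V : Type*} (G : SimpleGraph V)
    (c p : ℕ) (hp : p.Prime) (hpc : 2 * c - 1 ≤ p)
    (f : V → Fin c) (hproper : ∀ v w, G.Adj v w → f v ≠ f w)
    (t : V → ℤ) (ht : ∀ v, (t v : ZMod p) = (((f v : ℕ) : ZMod p)) ^ 2)
    (pos : V → ℤ × ℤ × ℤ)
    (hpos : ∀ v, pos v = (((f v : ℕ) : ℤ), t v, ((f v : ℕ) : ℤ) * t v))
    (hdist : Function.Injective pos) :
    (∀ v w x y, G.Adj v w → G.Adj x y →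
      ¬ (v = x ∧ w = y) → ¬ (v = y ∧ w = x) →
      ∀ z ∈ segment ℝ (toR3 (pos v)) (toR3 (pos w)),
        z ∈ segment ℝ (toR3 (pos x)) (toR3 (pos y)) →
        ∃ u, (u = v ∨ u = w) ∧ (u = x ∨ u = y) ∧ z = toR3 (pos u)) ∧
    (∀ v w u, G.Adj v w → u ≠ v → u ≠ w →
      toR3 (pos u) ∉ segment ℝ (toR3 (pos v)) (toR3 (pos w))) := by
  have := Fact.mk hp
  set P : V → ℝ × ℝ × ℝ := fun v => saddlePoint ((f v : ℕ) : ℝ) (t v)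
  have hP (v : V) : toR3 (pos v) = P v := by simp [P, hpos, toR3, saddlePoint]
  have hinj {u v : V} (h : P u = P v) : u = v := hdist (toR3_injective (by rw [hP, hP, h]))
  have hend {v w : V} (hvw : G.Adj v w) {z : ℝ × ℝ × ℝ} (hz : z ∈ segment ℝ (P v) (P w)) :
      saddleDefect z = 0 ↔ z = P v ∨ z = P w :=
    saddleDefect_eq_zero_iff_of_mem_segment (by exact_mod_cast Fin.val_ne_of_ne (hproper v w hvw))
      (by exact_mod_cast mt (colour_eq_of_t_eq hpc ht) (hproper v w hvw)) hz
  simp only [hP]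
  refine ⟨fun v w x y hvw hxy hne₁ hne₂ z hz₁ hz₂ => ?_, fun v w u hvw huv huw hu => ?_⟩
  · by_cases hz : saddleDefect z = 0
    · obtain ⟨u, hu, rfl⟩ : ∃ u, (u = v ∨ u = w) ∧ z = P u := by
        rcases (hend hvw hz₁).1 hz with h | h
        exacts [⟨v, .inl rfl, h⟩, ⟨w, .inr rfl, h⟩]
      rcases (hend hxy hz₂).1 hz with h | h
      exacts [⟨u, hu, .inl (hinj h), rfl⟩, ⟨u, hu, .inr (hinj h), rfl⟩]
    · rcases eq_or_eq_of_mem_openSegment_inter hpc ht (hproper v w hvw) (hproper x y hxy)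
        (mem_openSegment_of_saddleDefect_ne_zero hz₁ hz)
        (mem_openSegment_of_saddleDefect_ne_zero hz₂ hz) with ⟨h₁, h₂⟩ | ⟨h₁, h₂⟩
      exacts [(hne₁ ⟨hinj h₁, hinj h₂⟩).elim, (hne₂ ⟨hinj h₁, hinj h₂⟩).elim]
  · rcases (hend hvw hu).1 (saddleDefect_saddlePoint _ _) with h | h
    exacts [huv (hinj h), huw (hinj h)]
end
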